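/- arXiv:2512.03480 — 9 statements merged into one kernel-verified Lean document; each statement's English description precedes it below -/
import Mathlib

section
/- Let ω be an m×n partial permutation with extension ω̃ ∈ S_{m+n}, and define the Rothe diagram D(ω̃) = {(i,j) ∈ [1,m+n]×[1,m+n] : ω̃(i) > j and ω̃⁻¹(j) > i}. Then D(ω̃) ⊆ [1,m]×[1,n]. -/
/-- A partial permutation: each row and each column contains at most one entry equal
to `1`, with all other entries equal to `0`. -/
def IsPartialPerm {m n : ℕ} (ω : Matrix (Fin m) (Fin n) ℝ) : Prop :=
  (∀ i j, ω i j = 0 ∨ ω i j = 1) ∧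
  (∀ i j j', ω i j = 1 → ω i j' = 1 → j = j') ∧
  (∀ i i' j, ω i j = 1 → ω i' j = 1 → i = i')

/-- The inclusion of row indices `[1,m]` into `[1,m+n]`. -/
def rowIdx {m n : ℕ} (i : Fin m) : Fin (m + n) := Fin.castLE (Nat.le_add_right m n) i

/-- The inclusion of column indices `[1,n]` into `[1,m+n]`. -/
def colIdx {m n : ℕ} (j : Fin n) : Fin (m + n) :=
  ⟨j.val, lt_of_lt_of_le j.isLt (Nat.le_add_left n (m))⟩

private lemma step_mono_aux {N M : ℕ} (f : Fin N → Fin N)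
    (h1 : ∀ (i : Fin N) (h : i.val + 1 < N), M ≤ i.val → f i < f ⟨i.val + 1, h⟩) :
    ∀ (a b : Fin N), M ≤ a.val → a < b → f a < f b := by
  intro a b ha hab
  obtain ⟨d, hd⟩ : ∃ d, b.val = a.val + d + 1 := ⟨b.val - a.val - 1, by
    have := (Fin.lt_iff_val_lt_val).mp hab; omega⟩
  induction d generalizing b with
  | zero =>
    have hb : b = ⟨a.val + 1, by omega⟩ := Fin.ext (by simp only [Fin.val_mk]; omega)
    rw [hb]; exact h1 a (by omega) ha
  | succ d ih =>
    have hlt : a.val + d + 1 < N := by have := b.isLt; omega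
    have hb' : f a < f ⟨a.val + d + 1, hlt⟩ :=
      ih ⟨a.val + d + 1, hlt⟩ (by simp only [Fin.lt_iff_val_lt_val, Fin.val_mk]; omega) rfl
    have hb : b = ⟨(a.val + d + 1) + 1, by omega⟩ := Fin.ext (by simp only [Fin.val_mk]; omega)
    rw [hb]
    exact lt_trans hb' (h1 ⟨a.val + d + 1, hlt⟩ (by simp only [Fin.val_mk]; omega) (by simp only [Fin.val_mk]; omega))

/-- Let `ω` be an m×n partial permutation and `σ` its extension, i.e. a
permutation of `[1,m+n]` whose permutation matrix has `ω` as upper-left m×n block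
(`hext`), increasing on rows `> m` and whose inverse is increasing on columns `> n`.
Then the Rothe diagram `D(σ) = {(i,j) : σ(i) > j ∧ σ⁻¹(j) > i}` is contained in
`[1,m] × [1,n]`. -/
theorem rothe_subset {m n : ℕ} (ω : Matrix (Fin m) (Fin n) ℝ) (hω : IsPartialPerm ω)
    (σ : Equiv.Perm (Fin (m + n)))
    (hext : ∀ (i : Fin m) (j : Fin n), ω i j = 1 ↔ σ (rowIdx i) = colIdx j)
    (h1 : ∀ (i : Fin (m + n)) (h : i.val + 1 < m + n), m ≤ i.val → σ i < σ ⟨i.val + 1, h⟩)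
    (h2 : ∀ (j : Fin (m + n)) (h : j.val + 1 < m + n), n ≤ j.val →
      σ.symm j < σ.symm ⟨j.val + 1, h⟩) :
    ∀ i j : Fin (m + n), j < σ i → i < σ.symm j → i.val < m ∧ j.val < n := by
  intro i j hj hi
  constructor
  · by_contra hm
    push_neg at hm
    have := step_mono_aux σ h1 i (σ.symm j) hm hi
    rw [Equiv.apply_symm_apply] at this
    exact absurd this (not_lt.mpr (le_of_lt hj))
  · by_contra hn
    push_neg at hn
    have := step_mono_aux σ.symm h2 j (σ i) hn hj
    rw [Equiv.symm_apply_apply] at this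
    exact absurd this (not_lt.mpr (le_of_lt hi))
end

section
/- Let ω be an m×n partial permutation with Rothe diagram D(ω). For (i,j) ∈ D(ω) define R(i,j) = {r ∈ [1, i−1] : row r of ω contains a 1 in some column c < j} (equivalently: rows above i containing a 1 in the upper-left i×j block) and C(i,j) = {c ∈ [1, j−1] : column c of ω contains a 1 in some row r < i}. Then ω is vexillary (i.e., its extension ω̃ avoids the pattern 2143, meaning there exist no i₁ < i₂ < i₃ < i₄ with ω̃(i₂) < ω̃(i₁) < ω̃(i₄) < ω̃(i₃)) if and only if for every (i,j) ∈ D(ω), the submatrix of ω with rows R(i,j) and columns C(i,j) is the identity matrix. -/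
attribute [local instance] Classical.propDecidable

/-- `R(i,j)`: the rows `r < i` of `ω` containing a `1` in some column `c < j`. -/
noncomputable def RSet {m n : ℕ} (ω : Matrix (Fin m) (Fin n) ℝ) (i : Fin m) (j : Fin n) :
    Finset (Fin m) :=
  Finset.univ.filter fun r => r < i ∧ ∃ c : Fin n, c < j ∧ ω r c = 1

/-- `C(i,j)`: the columns `c < j` of `ω` containing a `1` in some row `r < i`. -/
noncomputable def CSet {m n : ℕ} (ω : Matrix (Fin m) (Fin n) ℝ) (i : Fin m) (j : Fin n) :
    Finset (Fin n) :=
  Finset.univ.filter fun c => c < j ∧ ∃ r : Fin m, r < i ∧ ω r c = 1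

/- ---------- auxiliary lemmas ---------- -/

lemma stepMono {N k : ℕ} (f : Fin N → Fin N)
    (h : ∀ (i : Fin N) (h : i.val + 1 < N), k ≤ i.val → f i < f ⟨i.val + 1, h⟩) :
    ∀ a b : Fin N, k ≤ a.val → a < b → f a < f b := by
  intro a b ha hab
  obtain ⟨d, hd⟩ : ∃ d, b.val = a.val + 1 + d := ⟨b.val - (a.val + 1), by omega⟩
  induction d generalizing b with
  | zero =>
      have hb : b = ⟨a.val + 1, by omega⟩ := by apply Fin.ext; simp; omega
      rw [hb]
      exact h a (by omega) ha
  | succ d ih =>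
      have hb' : (⟨a.val + 1 + d, by omega⟩ : Fin N).val + 1 < N := by
        simp only [Fin.val_mk]; omega
      have h1 := ih ⟨a.val + 1 + d, by omega⟩ (by simp [Fin.lt_def]; omega) (by simp)
      have h2 := h ⟨a.val + 1 + d, by omega⟩ hb' (by simp; omega)
      have hb : b = ⟨a.val + 1 + d + 1, by omega⟩ := by apply Fin.ext; simp; omega
      rw [hb]
      exact lt_trans h1 h2

lemma colIdx_mk {m n : ℕ} (x : Fin (m + n)) (h : x.val < n) :
    colIdx (⟨x.val, h⟩ : Fin n) = x := Fin.ext rfl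

lemma rowIdx_mk {m n : ℕ} (x : Fin (m + n)) (h : x.val < m) :
    rowIdx (⟨x.val, h⟩ : Fin m) = x := Fin.ext rfl

lemma mem_RSet {m n : ℕ} (ω : Matrix (Fin m) (Fin n) ℝ)
    (σ : Equiv.Perm (Fin (m + n)))
    (hext : ∀ (i : Fin m) (j : Fin n), ω i j = 1 ↔ σ (rowIdx i) = colIdx j)
    (i : Fin m) (j : Fin n) (r : Fin m) :
    r ∈ RSet ω i j ↔ r < i ∧ (σ (rowIdx r)).val < j.val := by
  simp only [RSet, Finset.mem_filter, Finset.mem_univ, true_and]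
  constructor
  · rintro ⟨hri, c, hcj, hc⟩
    refine ⟨hri, ?_⟩
    have hcc := (hext r c).mp hc
    rw [hcc]
    exact hcj
  · rintro ⟨hri, hv⟩
    refine ⟨hri, ⟨(σ (rowIdx r)).val, lt_trans hv j.isLt⟩, hv, ?_⟩
    exact (hext r _).mpr (Fin.ext rfl)

lemma mem_CSet {m n : ℕ} (ω : Matrix (Fin m) (Fin n) ℝ)
    (σ : Equiv.Perm (Fin (m + n)))
    (hext : ∀ (i : Fin m) (j : Fin n), ω i j = 1 ↔ σ (rowIdx i) = colIdx j)
    (i : Fin m) (j : Fin n) (c : Fin n) :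
    c ∈ CSet ω i j ↔ c < j ∧ (σ.symm (colIdx c)).val < i.val := by
  simp only [CSet, Finset.mem_filter, Finset.mem_univ, true_and]
  constructor
  · rintro ⟨hcj, r, hri, hr⟩
    refine ⟨hcj, ?_⟩
    have h1 := (hext r c).mp hr
    have h2 : σ.symm (colIdx c) = rowIdx r := by rw [← h1]; simp
    rw [h2]
    exact hri
  · rintro ⟨hcj, hv⟩
    have him : (σ.symm (colIdx c)).val < m := lt_trans hv i.isLt
    refine ⟨hcj, ⟨(σ.symm (colIdx c)).val, him⟩, hv, ?_⟩
    apply (hext _ _).mpr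
    rw [rowIdx_mk _ him, Equiv.apply_symm_apply]

/-- a partial permutation `ω` (with extension `σ`) is vexillary, i.e. `σ`
avoids the pattern `2143`, if and only if for every `(i,j)` in the Rothe diagram of `ω`
the submatrix of `ω` on rows `R(i,j)` and columns `C(i,j)` is the identity matrix. -/
theorem vexillary_iff_identity_restriction {m n : ℕ}
    (ω : Matrix (Fin m) (Fin n) ℝ) (hω : IsPartialPerm ω)
    (σ : Equiv.Perm (Fin (m + n)))
    (hext : ∀ (i : Fin m) (j : Fin n), ω i j = 1 ↔ σ (rowIdx i) = colIdx j)
    (h1 : ∀ (i : Fin (m + n)) (h : i.val + 1 < m + n), m ≤ i.val → σ i < σ ⟨i.val + 1, h⟩)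
    (h2 : ∀ (j : Fin (m + n)) (h : j.val + 1 < m + n), n ≤ j.val →
      σ.symm j < σ.symm ⟨j.val + 1, h⟩) :
    (¬ ∃ i₁ i₂ i₃ i₄ : Fin (m + n), i₁ < i₂ ∧ i₂ < i₃ ∧ i₃ < i₄ ∧
        σ i₂ < σ i₁ ∧ σ i₁ < σ i₄ ∧ σ i₄ < σ i₃) ↔
    (∀ (i : Fin m) (j : Fin n), colIdx j < σ (rowIdx i) → rowIdx i < σ.symm (colIdx j) →
      ∃ h : (RSet ω i j).card = (CSet ω i j).card,
        ∀ a b : Fin (RSet ω i j).card,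
          ω ((RSet ω i j).orderIsoOfFin rfl a : Fin m)
            ((CSet ω i j).orderIsoOfFin h.symm b : Fin n) =
            if (a : ℕ) = (b : ℕ) then 1 else 0) := by
  constructor
  · -- vexillary → identity restriction
    intro hav i j hij1 hij2
    -- σ is strictly increasing on R(i,j)
    have hmonoR : ∀ r1 r2 : Fin m, r1 ∈ RSet ω i j → r2 ∈ RSet ω i j → r1 < r2 →
        σ (rowIdx r1) < σ (rowIdx r2) := by
      intro r1 r2 hr1 hr2 h12
      by_contra hle
      push_neg at hle
      have hne : σ (rowIdx r2) ≠ σ (rowIdx r1) := by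
        intro heq
        have : rowIdx r2 = rowIdx r1 := σ.injective heq
        have hvv : (rowIdx r2).val = (rowIdx r1).val := congrArg Fin.val this
        have : r2 = r1 := Fin.ext hvv
        exact absurd this (ne_of_gt h12)
      have hlt : σ (rowIdx r2) < σ (rowIdx r1) := lt_of_le_of_ne hle hne
      apply hav
      refine ⟨rowIdx r1, rowIdx r2, rowIdx i, σ.symm (colIdx j), ?_, ?_, ?_, hlt, ?_, ?_⟩
      · exact h12
      · exact ((mem_RSet ω σ hext i j r2).mp hr2).1
      · exact hij2
      · have := ((mem_RSet ω σ hext i j r1).mp hr1).2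
        rw [Equiv.apply_symm_apply]
        exact this
      · rw [Equiv.apply_symm_apply]
        exact hij1
    -- the cardinalities agree, via the bijection induced by σ
    have hcard : (RSet ω i j).card = (CSet ω i j).card := by
      apply Finset.card_bij (fun r hr => (⟨(σ (rowIdx r)).val,
        lt_trans ((mem_RSet ω σ hext i j r).mp hr).2 j.isLt⟩ : Fin n))
      · intro r hr
        rw [mem_CSet ω σ hext]
        obtain ⟨hri, hv⟩ := (mem_RSet ω σ hext i j r).mp hr
        refine ⟨hv, ?_⟩
        rw [colIdx_mk, Equiv.symm_apply_apply]
        exact hri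
      · intro r1 hr1 r2 hr2 heq
        have hval := congrArg Fin.val heq
        have hσeq : σ (rowIdx r1) = σ (rowIdx r2) := Fin.ext hval
        have hrr : rowIdx r1 = rowIdx r2 := σ.injective hσeq
        have hvv : (rowIdx r1).val = (rowIdx r2).val := congrArg Fin.val hrr
        exact Fin.ext hvv
      · intro c hc
        obtain ⟨hcj, hv⟩ := (mem_CSet ω σ hext i j c).mp hc
        have hrm : (σ.symm (colIdx c)).val < m := lt_trans hv i.isLt
        have hrR : (⟨(σ.symm (colIdx c)).val, hrm⟩ : Fin m) ∈ RSet ω i j := by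
          rw [mem_RSet ω σ hext]
          refine ⟨hv, ?_⟩
          rw [rowIdx_mk _ hrm, Equiv.apply_symm_apply]
          exact hcj
        refine ⟨⟨(σ.symm (colIdx c)).val, hrm⟩, hrR, ?_⟩
        apply Fin.ext
        show (σ (rowIdx (⟨(σ.symm (colIdx c)).val, hrm⟩ : Fin m))).val = c.val
        rw [rowIdx_mk _ hrm, Equiv.apply_symm_apply]
        rfl
    refine ⟨hcard, ?_⟩
    have hmem : ∀ k : Fin (RSet ω i j).card,
        ((RSet ω i j).orderIsoOfFin rfl k : Fin m) ∈ RSet ω i j :=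
      fun k => ((RSet ω i j).orderIsoOfFin rfl k).2
    have hσn : ∀ k : Fin (RSet ω i j).card,
        (σ (rowIdx ((RSet ω i j).orderIsoOfFin rfl k : Fin m))).val < n :=
      fun k => lt_trans ((mem_RSet ω σ hext i j _).mp (hmem k)).2 j.isLt
    have hψC : ∀ k : Fin (RSet ω i j).card,
        (⟨(σ (rowIdx ((RSet ω i j).orderIsoOfFin rfl k : Fin m))).val, hσn k⟩ : Fin n)
          ∈ CSet ω i j := by
      intro k
      rw [mem_CSet ω σ hext]
      refine ⟨((mem_RSet ω σ hext i j _).mp (hmem k)).2, ?_⟩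
      rw [colIdx_mk, Equiv.symm_apply_apply]
      exact ((mem_RSet ω σ hext i j _).mp (hmem k)).1
    set ψ : Fin (RSet ω i j).card → {x // x ∈ CSet ω i j} := fun k =>
      ⟨⟨(σ (rowIdx ((RSet ω i j).orderIsoOfFin rfl k : Fin m))).val, hσn k⟩, hψC k⟩
      with hψdef
    have hψmono : StrictMono ψ := by
      intro k k' hkk'
      have ha : ((RSet ω i j).orderIsoOfFin rfl k : Fin m) <
          ((RSet ω i j).orderIsoOfFin rfl k' : Fin m) :=
        Subtype.coe_lt_coe.mpr (((RSet ω i j).orderIsoOfFin rfl).strictMono hkk')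
      have hb := hmonoR _ _ (hmem k) (hmem k') ha
      exact Subtype.mk_lt_mk.mpr (Fin.mk_lt_mk.mpr hb)
    have hψsurj : Function.Surjective ψ := by
      rintro ⟨c, hc⟩
      obtain ⟨hcj, hv⟩ := (mem_CSet ω σ hext i j c).mp hc
      have hrm : (σ.symm (colIdx c)).val < m := lt_trans hv i.isLt
      have hrR : (⟨(σ.symm (colIdx c)).val, hrm⟩ : Fin m) ∈ RSet ω i j := by
        rw [mem_RSet ω σ hext]
        refine ⟨hv, ?_⟩
        rw [rowIdx_mk _ hrm, Equiv.apply_symm_apply]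
        exact hcj
      refine ⟨((RSet ω i j).orderIsoOfFin rfl).symm ⟨_, hrR⟩, ?_⟩
      apply Subtype.ext
      apply Fin.ext
      show (σ (rowIdx (((RSet ω i j).orderIsoOfFin rfl)
          (((RSet ω i j).orderIsoOfFin rfl).symm ⟨_, hrR⟩) : Fin m))).val = c.val
      rw [OrderIso.apply_symm_apply]
      show (σ (rowIdx (⟨(σ.symm (colIdx c)).val, hrm⟩ : Fin m))).val = c.val
      rw [rowIdx_mk _ hrm, Equiv.apply_symm_apply]
      rfl
    have hiso : StrictMono.orderIsoOfSurjective ψ hψmono hψsurj =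
        (CSet ω i j).orderIsoOfFin hcard.symm := Subsingleton.elim _ _
    have key : ∀ k : Fin (RSet ω i j).card,
        σ (rowIdx ((RSet ω i j).orderIsoOfFin rfl k : Fin m)) =
          colIdx ((CSet ω i j).orderIsoOfFin hcard.symm k : Fin n) := by
      intro k
      rw [← hiso]
      have hc : ((StrictMono.orderIsoOfSurjective ψ hψmono hψsurj k : {x // x ∈ CSet ω i j})
          : Fin n) = ((ψ k : {x // x ∈ CSet ω i j}) : Fin n) := rfl
      rw [hc]
      exact (colIdx_mk _ (hσn k)).symm
    intro a b
    by_cases hab : (a : ℕ) = (b : ℕ)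
    · have hab' : a = b := Fin.ext hab
      subst hab'
      rw [if_pos rfl]
      exact (hext _ _).mpr (key a)
    · rw [if_neg hab]
      rcases hω.1 ((RSet ω i j).orderIsoOfFin rfl a : Fin m)
        ((CSet ω i j).orderIsoOfFin hcard.symm b : Fin n) with h0 | hone
      · exact h0
      · exfalso
        have hA : ω ((RSet ω i j).orderIsoOfFin rfl a : Fin m)
            ((CSet ω i j).orderIsoOfFin hcard.symm a : Fin n) = 1 :=
          (hext _ _).mpr (key a)
        have hcc : ((CSet ω i j).orderIsoOfFin hcard.symm b : Fin n) =
            ((CSet ω i j).orderIsoOfFin hcard.symm a : Fin n) :=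
          hω.2.1 _ _ _ hone hA
        have : b = a := ((CSet ω i j).orderIsoOfFin hcard.symm).injective (Subtype.ext hcc)
        exact hab (by rw [this])
  · -- identity restriction → vexillary
    rintro hRHS ⟨i1, i2, i3, i4, h12, h23, h34, hv1, hv2, hv3⟩
    have hmσ := stepMono (N := m + n) (k := m) σ h1
    have hmσ' := stepMono (N := m + n) (k := n) σ.symm h2
    have hi3 : i3.val < m := by
      by_contra hge
      push_neg at hge
      exact absurd (hmσ i3 i4 hge h34) (not_lt.mpr (le_of_lt hv3))
    have hj4 : (σ i4).val < n := by
      by_contra hge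
      push_neg at hge
      have hx := hmσ' (σ i4) (σ i3) hge hv3
      simp only [Equiv.symm_apply_apply] at hx
      exact absurd hx (not_lt.mpr (le_of_lt h34))
    obtain ⟨h, hid⟩ := hRHS ⟨i3.val, hi3⟩ ⟨(σ i4).val, hj4⟩
      (by rw [rowIdx_mk _ hi3, colIdx_mk _ hj4]; exact hv3)
      (by rw [rowIdx_mk _ hi3, colIdx_mk _ hj4, Equiv.symm_apply_apply]; exact h34)
    have hi1 : i1.val < m := lt_trans (lt_trans h12 h23) hi3
    have hi2 : i2.val < m := lt_trans h23 hi3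
    have hr1R : (⟨i1.val, hi1⟩ : Fin m) ∈ RSet ω ⟨i3.val, hi3⟩ ⟨(σ i4).val, hj4⟩ := by
      rw [mem_RSet ω σ hext]
      refine ⟨Fin.mk_lt_mk.mpr (lt_trans (Fin.lt_def.mp h12) (Fin.lt_def.mp h23)), ?_⟩
      rw [rowIdx_mk _ hi1]
      exact hv2
    have hr2R : (⟨i2.val, hi2⟩ : Fin m) ∈ RSet ω ⟨i3.val, hi3⟩ ⟨(σ i4).val, hj4⟩ := by
      rw [mem_RSet ω σ hext]
      refine ⟨Fin.mk_lt_mk.mpr (Fin.lt_def.mp h23), ?_⟩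
      rw [rowIdx_mk _ hi2]
      exact lt_trans hv1 hv2
    set R := RSet ω ⟨i3.val, hi3⟩ ⟨(σ i4).val, hj4⟩ with hRdef
    set Cord := (CSet ω ⟨i3.val, hi3⟩ ⟨(σ i4).val, hj4⟩).orderIsoOfFin h.symm with hCorddef
    set a := (R.orderIsoOfFin rfl).symm ⟨_, hr1R⟩ with hadef
    set b := (R.orderIsoOfFin rfl).symm ⟨_, hr2R⟩ with hbdef
    have hab : a < b := by
      rw [hadef, hbdef, ← OrderIso.lt_iff_lt (R.orderIsoOfFin rfl),
        OrderIso.apply_symm_apply, OrderIso.apply_symm_apply]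
      exact Subtype.mk_lt_mk.mpr h12
    have hA := hid a a
    rw [if_pos rfl] at hA
    have hB := hid b b
    rw [if_pos rfl] at hB
    have hra : ((R.orderIsoOfFin rfl) a : Fin m) = ⟨i1.val, hi1⟩ := by
      rw [hadef, OrderIso.apply_symm_apply]
    have hrb : ((R.orderIsoOfFin rfl) b : Fin m) = ⟨i2.val, hi2⟩ := by
      rw [hbdef, OrderIso.apply_symm_apply]
    rw [hra] at hA
    rw [hrb] at hB
    have hA' := (hext _ _).mp hA
    have hB' := (hext _ _).mp hB
    rw [rowIdx_mk _ hi1] at hA'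
    rw [rowIdx_mk _ hi2] at hB'
    have hcab : (Cord a : Fin n) < (Cord b : Fin n) :=
      Subtype.coe_lt_coe.mpr (Cord.strictMono hab)
    have hfin : (σ i1).val < (σ i2).val := by
      have e1 : (σ i1).val = ((Cord a : Fin n) : ℕ) := congrArg Fin.val hA'
      have e2 : (σ i2).val = ((Cord b : Fin n) : ℕ) := congrArg Fin.val hB'
      rw [e1, e2]
      exact hcab
    exact absurd hfin (not_lt.mpr (le_of_lt hv1))
end

section
/- Let A and B be m×n real matrices. Then rk(A_{[p,q]}) = rk(B_{[p,q]}) for all 1 ≤ p ≤ m and 1 ≤ q ≤ n if and only if there exist an invertible lower triangular m×m matrix λ and an invertible upper triangular n×n matrix μ such that B = λ A μ. Here A_{[p,q]} denotes the upper-left p×q submatrix of A. -/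
/-- The upper-left `p × q` submatrix `A_{[p,q]}` of an `m × n` matrix. -/
def ulSub {m n : ℕ} (A : Matrix (Fin m) (Fin n) ℝ) (p q : ℕ) (hp : p ≤ m) (hq : q ≤ n) :
    Matrix (Fin p) (Fin q) ℝ :=
  A.submatrix (Fin.castLE hp) (Fin.castLE hq)

/-!
The ranks of the upper-left blocks are invariant under `A ↦ L * A * U` with `L` invertible
lower triangular and `U` invertible upper triangular, because
`(L * A * U)_{[p,q]} = L_{[p,p]} * A_{[p,q]} * U_{[q,q]}` with invertible corner blocks.
Conversely, Gaussian elimination that only adds multiples of a row to later rows and of a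
column to later columns (and rescales) brings any matrix, row by row, to a rook matrix: a
0/1 matrix with at most one 1 in each row and each column. The rank of the upper-left
`p × q` block of a rook matrix is the number of its rooks in that block, and these corner
counts recover the rooks by inclusion–exclusion. Hence matrices with equal corner ranks
reduce to the same rook matrix.
-/

open Matrix Finset

section TriangularEquiv

variable {R : Type*} [CommRing R]
  {m n : Type*} [Fintype m] [Fintype n] [DecidableEq m] [DecidableEq n] [LinearOrder m]
  [LinearOrder n]

def TriangularEquiv (A B : Matrix m n R) : Prop :=
  ∃ (L : Matrix m m R) (U : Matrix n n R), L.IsLowerTriangular ∧ U.IsUpperTriangular ∧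
    IsUnit L.det ∧ IsUnit U.det ∧ B = L * A * U

namespace TriangularEquiv

theorem refl (A : Matrix m n R) : TriangularEquiv A A :=
  ⟨1, 1, blockTriangular_one, blockTriangular_one, by simp, by simp, by simp⟩

theorem symm {A B : Matrix m n R} (h : TriangularEquiv A B) : TriangularEquiv B A := by
  obtain ⟨L, U, hL, hU, hLd, hUd, rfl⟩ := h
  let _ := L.invertibleOfIsUnitDet hLd
  let _ := U.invertibleOfIsUnitDet hUd
  refine ⟨L⁻¹, U⁻¹, blockTriangular_inv_of_blockTriangular hL,
    blockTriangular_inv_of_blockTriangular hU, L.isUnit_nonsing_inv_det hLd,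
    U.isUnit_nonsing_inv_det hUd, ?_⟩
  simp [Matrix.mul_assoc]

theorem trans {A B C : Matrix m n R} (h₁ : TriangularEquiv A B) (h₂ : TriangularEquiv B C) :
    TriangularEquiv A C := by
  obtain ⟨L, U, hL, hU, hLd, hUd, rfl⟩ := h₁
  obtain ⟨L', U', hL', hU', hLd', hUd', rfl⟩ := h₂
  refine ⟨L' * L, U * U', hL'.mul hL, hU.mul hU', ?_, ?_, ?_⟩
  · simpa only [det_mul] using hLd'.mul hLd
  · simpa only [det_mul] using hUd.mul hUd'
  · simp only [Matrix.mul_assoc]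

end TriangularEquiv

theorem triangularEquiv_add_vecMulVec_row (M : Matrix m n R) (i₀ : m) (v : m → R)
    (hv : ∀ i < i₀, v i = 0) (hv₀ : IsUnit (1 + v i₀)) :
    TriangularEquiv M (M + vecMulVec v (M i₀)) := by
  refine ⟨1 + vecMulVec v (Pi.single i₀ 1), (1 : Matrix n n R), fun i j hij => ?_,
    blockTriangular_one, ?_, by simp, ?_⟩
  · have hij : i < j := hij
    by_cases hj : j = i₀
    · subst hj; simp [vecMulVec_apply, one_apply, hij.ne, hv i hij]
    · simp [vecMulVec_apply, one_apply, hij.ne, hj]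
  · rwa [vecMulVec_eq Unit, det_one_add_replicateCol_mul_replicateRow, single_one_dotProduct]
  · rw [Matrix.mul_one, Matrix.add_mul, Matrix.one_mul, vecMulVec_mul, single_one_vecMul]
    rfl

theorem triangularEquiv_add_vecMulVec_col (M : Matrix m n R) (j₀ : n) (w : n → R)
    (hw : ∀ j < j₀, w j = 0) (hw₀ : IsUnit (1 + w j₀)) :
    TriangularEquiv M (M + vecMulVec (fun i => M i j₀) w) := by
  refine ⟨(1 : Matrix m m R), 1 + vecMulVec (Pi.single j₀ 1) w, blockTriangular_one,
    fun i j hji => ?_, by simp, ?_, ?_⟩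
  · have hji : j < i := hji
    by_cases hi : i = j₀
    · subst hi; simp [vecMulVec_apply, one_apply, hji.ne', hw j hji]
    · simp [vecMulVec_apply, one_apply, hji.ne', hi]
  · rwa [vecMulVec_eq Unit, det_one_add_replicateCol_mul_replicateRow, dotProduct_single_one]
  · rw [Matrix.one_mul, Matrix.mul_add, Matrix.mul_one, mul_vecMulVec, mulVec_single_one]
    rfl

end TriangularEquiv

section LeadingSubmatrix

variable {R : Type*} [CommRing R] {m n p q : ℕ}

theorem Fin.sum_castLE_eq_sum {M : Type*} [AddCommMonoid M] (hp : p ≤ m) (f : Fin m → M)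
    (hf : ∀ k : Fin m, p ≤ k → f k = 0) :
    ∑ k : Fin p, f (Fin.castLE hp k) = ∑ k, f k := by
  refine Finset.sum_of_injOn _ (Fin.castLE_injective hp).injOn (by simp)
    (fun k _ hk => hf k ?_) fun _ _ => rfl
  by_contra! hkp
  exact hk ⟨⟨k, hkp⟩, by simp, rfl⟩

theorem Matrix.IsLowerTriangular.submatrix_castLE_mul {ι κ : Type*}
    {L : Matrix (Fin m) (Fin m) R} (hL : L.IsLowerTriangular) (A : Matrix (Fin m) ι R)
    (hp : p ≤ m) (c : κ → ι) :
    (L * A).submatrix (Fin.castLE hp) c =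
      L.submatrix (Fin.castLE hp) (Fin.castLE hp) * A.submatrix (Fin.castLE hp) c := by
  ext i j
  simp only [submatrix_apply, mul_apply]
  refine (Fin.sum_castLE_eq_sum hp _ fun k hk => ?_).symm
  exact mul_eq_zero_of_left (hL (show Fin.castLE hp i < k by rw [Fin.lt_def]; simp; omega)) _

theorem Matrix.IsUpperTriangular.mul_submatrix_castLE {ι κ : Type*}
    {U : Matrix (Fin n) (Fin n) R} (hU : U.IsUpperTriangular) (A : Matrix ι (Fin n) R)
    (hq : q ≤ n) (r : κ → ι) :
    (A * U).submatrix r (Fin.castLE hq) =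
      A.submatrix r (Fin.castLE hq) * U.submatrix (Fin.castLE hq) (Fin.castLE hq) := by
  ext i j
  simp only [submatrix_apply, mul_apply]
  refine (Fin.sum_castLE_eq_sum hq _ fun k hk => ?_).symm
  exact mul_eq_zero_of_right _ (hU (by rw [Fin.lt_def]; simp; omega))

theorem Matrix.IsLowerTriangular.isUnit_det_submatrix_castLE {L : Matrix (Fin m) (Fin m) R}
    (hL : L.IsLowerTriangular) (hLd : IsUnit L.det) (hp : p ≤ m) :
    IsUnit (L.submatrix (Fin.castLE hp) (Fin.castLE hp)).det := by
  rw [det_of_isLowerTriangular _ hL, IsUnit.prod_univ_iff] at hLd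
  rw [det_of_isLowerTriangular (L.submatrix (Fin.castLE hp) (Fin.castLE hp)) fun i j h => hL h,
    IsUnit.prod_univ_iff]
  exact fun i => hLd _

theorem Matrix.IsUpperTriangular.isUnit_det_submatrix_castLE {U : Matrix (Fin n) (Fin n) R}
    (hU : U.IsUpperTriangular) (hUd : IsUnit U.det) (hq : q ≤ n) :
    IsUnit (U.submatrix (Fin.castLE hq) (Fin.castLE hq)).det := by
  rw [det_of_isUpperTriangular hU, IsUnit.prod_univ_iff] at hUd
  rw [det_of_isUpperTriangular (M := U.submatrix (Fin.castLE hq) (Fin.castLE hq))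
    (fun i j h => hU h), IsUnit.prod_univ_iff]
  exact fun i => hUd _

theorem TriangularEquiv.rank_submatrix_castLE {A B : Matrix (Fin m) (Fin n) R}
    (h : TriangularEquiv A B) (hp : p ≤ m) (hq : q ≤ n) :
    (B.submatrix (Fin.castLE hp) (Fin.castLE hq)).rank =
      (A.submatrix (Fin.castLE hp) (Fin.castLE hq)).rank := by
  obtain ⟨L, U, hL, hU, hLd, hUd, rfl⟩ := h
  rw [hU.mul_submatrix_castLE, hL.submatrix_castLE_mul,
    rank_mul_eq_left_of_isUnit_det _ _ (hU.isUnit_det_submatrix_castLE hUd hq),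
    rank_mul_eq_right_of_isUnit_det _ _ (hL.isUnit_det_submatrix_castLE hLd hp)]

end LeadingSubmatrix

section RookPlacement

variable {R : Type*} [CommRing R] {m n : Type*}

def IsRookPlacement (S : Finset (m × n)) : Prop :=
  ∀ x ∈ S, ∀ y ∈ S, x.1 = y.1 ↔ x.2 = y.2

theorem IsRookPlacement.preimage {p q : Type*} {S : Finset (m × n)} (hS : IsRookPlacement S)
    {e₁ : p → m} {e₂ : q → n} (he₁ : e₁.Injective) (he₂ : e₂.Injective) :
    IsRookPlacement (S.preimage (Prod.map e₁ e₂) (he₁.prodMap he₂).injOn) := by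
  intro x hx y hy
  simpa [he₁.eq_iff, he₂.eq_iff] using hS _ (mem_preimage.1 hx) _ (mem_preimage.1 hy)

theorem IsRookPlacement.insert [DecidableEq m] [DecidableEq n] {S : Finset (m × n)}
    (hS : IsRookPlacement S) {a : m × n} (ha : ∀ x ∈ S, x.1 ≠ a.1 ∧ x.2 ≠ a.2) :
    IsRookPlacement (insert a S) := by
  intro x hx y hy
  rcases mem_insert.1 hx with rfl | hx' <;> rcases mem_insert.1 hy with rfl | hy'
  · exact iff_of_true rfl rfl
  · exact iff_of_false (ha y hy').1.symm (ha y hy').2.symm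
  · exact iff_of_false (ha x hx').1 (ha x hx').2
  · exact hS x hx' y hy'

variable [DecidableEq m] [DecidableEq n]

variable (R) in
def rookMatrix (S : Finset (m × n)) : Matrix m n R :=
  of fun i j => if (i, j) ∈ S then 1 else 0

@[simp]
theorem rookMatrix_apply (S : Finset (m × n)) (i : m) (j : n) :
    rookMatrix R S i j = if (i, j) ∈ S then 1 else 0 :=
  rfl

theorem IsRookPlacement.rank_rookMatrix [Fintype m] [Fintype n] [Nontrivial R]
    {S : Finset (m × n)} (hS : IsRookPlacement S) : (rookMatrix R S).rank = #S := by
  let E₁ : Matrix m S R := of fun i x => if i = x.1.1 then 1 else 0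
  let E₂ : Matrix n S R := of fun j x => if j = x.1.2 then 1 else 0
  have hfst (x y : S) : y.1.1 = x.1.1 ↔ x = y :=
    ⟨fun h => Subtype.ext (Prod.ext h.symm ((hS _ x.2 _ y.2).1 h.symm)), fun h => h ▸ rfl⟩
  have hsnd (x y : S) : y.1.2 = x.1.2 ↔ x = y :=
    ⟨fun h => Subtype.ext (Prod.ext ((hS _ x.2 _ y.2).2 h.symm) h.symm), fun h => h ▸ rfl⟩
  have hE₁ : E₁ᵀ * E₁ = 1 := by
    ext x y
    simp [E₁, mul_apply, one_apply, hfst]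
  have hE₂ : E₂ᵀ * E₂ = 1 := by
    ext x y
    simp [E₂, mul_apply, one_apply, hsnd]
  have hP : rookMatrix R S = E₁ * E₂ᵀ := by
    ext i j
    simp only [rookMatrix, E₁, E₂, mul_apply, of_apply, transpose_apply, ← ite_and, mul_ite,
      mul_one, mul_zero, and_comm (a := j = _)]
    rw [Finset.sum_coe_sort S fun x => if i = x.1 ∧ j = x.2 then (1 : R) else 0]
    simp_rw [← Prod.ext_iff (x := (i, j)), Finset.sum_ite_eq]
  refine le_antisymm ?_ ?_
  · calc (rookMatrix R S).rank ≤ E₂ᵀ.rank := hP ▸ rank_mul_le_right _ _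
      _ ≤ #S := by simpa using E₂ᵀ.rank_le_card_height
  · calc #S = (E₁ᵀ * rookMatrix R S * E₂).rank := by
          rw [hP, ← Matrix.mul_assoc, hE₁, Matrix.one_mul, hE₂, rank_one, Fintype.card_coe]
      _ ≤ (rookMatrix R S).rank := (rank_mul_le_left _ _).trans (rank_mul_le_right _ _)

theorem rookMatrix_submatrix {p q : Type*} [DecidableEq p] [DecidableEq q]
    (S : Finset (m × n)) {e₁ : p → m} {e₂ : q → n} (he₁ : e₁.Injective)
    (he₂ : e₂.Injective) :
    (rookMatrix R S).submatrix e₁ e₂ =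
      rookMatrix R (S.preimage (Prod.map e₁ e₂) (he₁.prodMap he₂).injOn) := by
  ext i j
  simp [rookMatrix]

end RookPlacement

section CornerCount

variable {m n : ℕ}

def cornerCount (S : Finset (Fin m × Fin n)) (p q : ℕ) : ℕ :=
  #{x ∈ S | (x.1 : ℕ) < p ∧ (x.2 : ℕ) < q}

theorem IsRookPlacement.rank_submatrix_castLE {R : Type*} [CommRing R] [Nontrivial R]
    {S : Finset (Fin m × Fin n)} (hS : IsRookPlacement S) {p q : ℕ} (hp : p ≤ m)
    (hq : q ≤ n) :
    ((rookMatrix R S).submatrix (Fin.castLE hp) (Fin.castLE hq)).rank = cornerCount S p q := by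
  rw [rookMatrix_submatrix S (Fin.castLE_injective hp) (Fin.castLE_injective hq),
    (hS.preimage (Fin.castLE_injective hp) (Fin.castLE_injective hq)).rank_rookMatrix,
    card_preimage, cornerCount]
  congr 1
  refine filter_congr fun x _ => ⟨?_, fun h => ⟨(⟨x.1, h.1⟩, ⟨x.2, h.2⟩), rfl⟩⟩
  rintro ⟨y, rfl⟩
  simp

theorem cornerCount_inclusion_exclusion (S : Finset (Fin m × Fin n)) (i : Fin m) (j : Fin n) :
    (cornerCount S (i + 1) (j + 1) + cornerCount S i j : ℤ) - cornerCount S i (j + 1) -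
      cornerCount S (i + 1) j = if (i, j) ∈ S then 1 else 0 := by
  simp only [cornerCount, card_filter, Nat.cast_sum, Nat.cast_ite, Nat.cast_one, Nat.cast_zero,
    ← sum_add_distrib, ← sum_sub_distrib]
  rw [← sum_ite_eq' S (i, j) fun _ => (1 : ℤ)]
  refine sum_congr rfl fun x _ => ?_
  obtain ⟨a, b⟩ := x
  simp only [Prod.mk.injEq, Fin.ext_iff]
  split_ifs <;> omega

theorem eq_of_cornerCount_eq {S T : Finset (Fin m × Fin n)}
    (h : ∀ p q, p ≤ m → q ≤ n → cornerCount S p q = cornerCount T p q) : S = T := by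
  ext ⟨i, j⟩
  have hS := cornerCount_inclusion_exclusion S i j
  rw [h _ _ i.isLt j.isLt, h _ _ i.isLt.le j.isLt.le, h _ _ i.isLt.le j.isLt,
    h _ _ i.isLt j.isLt.le, cornerCount_inclusion_exclusion T i j] at hS
  split_ifs at hS <;> simp_all

end CornerCount

section Reduction

variable {K : Type*} [Field K] {m : ℕ} {n : Type*} [DecidableEq n]

/-- The invariant of the elimination after its first `k` rows. -/
structure IsRookReduced (k : ℕ) (S : Finset (Fin m × n)) (M : Matrix (Fin m) n K) : Prop where
  isRookPlacement : IsRookPlacement S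
  lt : ∀ x ∈ S, (x.1 : ℕ) < k
  eq : ∀ (i : Fin m) (j : n), ((i : ℕ) < k ∨ j ∈ S.image Prod.snd) →
    M i j = rookMatrix K S i j

namespace IsRookReduced

variable {k : ℕ} {S : Finset (Fin m × n)} {M : Matrix (Fin m) n K}

theorem zero (M : Matrix (Fin m) n K) : IsRookReduced 0 ∅ M :=
  ⟨by simp [IsRookPlacement], by simp, by simp⟩

theorem not_mem (h : IsRookReduced k S M) {i : Fin m} (hi : k ≤ i) (j : n) : (i, j) ∉ S :=
  fun hij => (h.lt _ hij).not_ge hi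

theorem succ_of_row_eq_zero (h : IsRookReduced k S M) (hk : k < m) (hr : M ⟨k, hk⟩ = 0) :
    IsRookReduced (k + 1) S M := by
  refine ⟨h.isRookPlacement, fun x hx => (h.lt x hx).trans k.lt_succ_self, fun i j hij => ?_⟩
  by_cases hik : (i : ℕ) = k
  · obtain rfl : i = ⟨k, hk⟩ := Fin.ext hik
    simp [hr, h.not_mem (i := ⟨k, hk⟩) le_rfl j]
  · exact h.eq i j (hij.imp_left fun hi => by omega)

theorem eq_rookMatrix (h : IsRookReduced m S M) : M = rookMatrix K S :=
  ext fun i j => h.eq i j (Or.inl i.isLt)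

variable [Fintype n] [LinearOrder n]

theorem exists_row_eq_single (h : IsRookReduced k S M) (hk : k < m) (hr : M ⟨k, hk⟩ ≠ 0) :
    ∃ j₀ ∉ S.image Prod.snd, ∃ N, TriangularEquiv M N ∧ IsRookReduced k S N ∧
      N ⟨k, hk⟩ = Pi.single j₀ 1 := by
  set r : Fin m := ⟨k, hk⟩
  set c := M r
  obtain ⟨j₀, hj₀ : c j₀ ≠ 0, hmin⟩ :=
    wellFounded_lt.has_min {j | c j ≠ 0} (Function.ne_iff.1 hr)
  have hc : ∀ j < j₀, c j = 0 := fun j hj => not_not.1 fun hcj => hmin j hcj hj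
  have hpiv : ∀ j ∈ S.image Prod.snd, c j = 0 := fun j hj => by
    simp [c, h.eq r j (Or.inr hj), h.not_mem (i := r) le_rfl j]
  -- chosen so that `c + c j₀ • w = Pi.single j₀ 1`, the new row `r`
  let w := (c j₀)⁻¹ • (Pi.single j₀ 1 - c)
  have hw : ∀ j < j₀, w j = 0 := fun j hj => by simp [w, hj.ne, hc j hj]
  have hw₀ : IsUnit (1 + w j₀) := by
    have : 1 + w j₀ = (c j₀)⁻¹ := by simp [w, mul_sub, inv_mul_cancel₀ hj₀]
    simpa [this] using hj₀
  have hj₀piv : j₀ ∉ S.image Prod.snd := fun hj => hj₀ (hpiv j₀ hj)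
  refine ⟨j₀, hj₀piv, _, triangularEquiv_add_vecMulVec_col M j₀ w hw hw₀,
    ⟨h.isRookPlacement, h.lt, fun i j hij => ?_⟩, ?_⟩
  · rw [Matrix.add_apply, vecMulVec_apply, h.eq i j hij, add_eq_left]
    rcases hij with hi | hj
    · have : (i, j₀) ∉ S := fun hm => hj₀piv (mem_image_of_mem Prod.snd hm)
      simp [h.eq i j₀ (Or.inl hi), this]
    · have : j ≠ j₀ := by rintro rfl; exact hj₀piv hj
      simp [w, this, hpiv j hj]
  · ext j
    change c j + c j₀ * ((c j₀)⁻¹ * ((Pi.single j₀ 1 : n → K) j - c j)) = _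
    rw [mul_inv_cancel_left₀ hj₀, add_sub_cancel]

theorem exists_succ_of_row_eq_single (h : IsRookReduced k S M) (hk : k < m) {j₀ : n}
    (hj₀ : j₀ ∉ S.image Prod.snd) (hr : M ⟨k, hk⟩ = Pi.single j₀ 1) :
    ∃ N, TriangularEquiv M N ∧ IsRookReduced (k + 1) (insert (⟨k, hk⟩, j₀) S) N := by
  set r : Fin m := ⟨k, hk⟩
  have hcol : ∀ i, (i, j₀) ∉ S := fun i hi => hj₀ (mem_image_of_mem Prod.snd hi)
  let v : Fin m → K := fun i => if r < i then -M i j₀ else 0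
  refine ⟨_, triangularEquiv_add_vecMulVec_row M r v (fun i hi => if_neg hi.not_gt)
    (by simp [v]), h.isRookPlacement.insert fun x hx =>
      ⟨?_, fun hx₂ => hj₀ (mem_image.2 ⟨x, hx, hx₂⟩)⟩, ?_, fun i j hij => ?_⟩
  · exact Fin.ne_of_lt (h.lt x hx)
  · simpa [Nat.lt_succ_iff] using ⟨le_rfl, fun x _ hx => (h.lt _ hx).le⟩
  rw [Matrix.add_apply, vecMulVec_apply, hr]
  by_cases hj : j = j₀
  · subst hj
    rcases lt_trichotomy i r with hi | rfl | hi
    · simp [v, hi.not_gt, h.eq i j (Or.inl hi), hcol, hi.ne]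
    · simp [v, hcol, hr]
    · simp [v, hi, hcol, hi.ne']
  · have hrow : i = r → (i, j) ∉ S := by rintro rfl; exact h.not_mem le_rfl j
    simp only [Pi.single_apply, hj, if_false, mul_zero, add_zero, rookMatrix_apply, mem_insert,
      Prod.mk.injEq, and_false, false_or]
    by_cases hir : i = r
    · simp [hir ▸ hr, hj, hrow hir]
    · refine h.eq i j (hij.imp (fun hi => ?_) fun hj' => ?_)
      · exact lt_of_le_of_ne (Nat.lt_succ_iff.1 hi) fun h' => hir (Fin.ext h')
      · simpa [hj] using hj'

theorem exists_succ (h : IsRookReduced k S M) (hk : k < m) :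
    ∃ S' N, TriangularEquiv M N ∧ IsRookReduced (k + 1) S' N := by
  by_cases hr : M ⟨k, hk⟩ = 0
  · exact ⟨S, M, .refl M, h.succ_of_row_eq_zero hk hr⟩
  · obtain ⟨j₀, hj₀, N, hMN, hN, hNr⟩ := h.exists_row_eq_single hk hr
    obtain ⟨N', hNN', hN'⟩ := hN.exists_succ_of_row_eq_single hk hj₀ hNr
    exact ⟨_, N', hMN.trans hNN', hN'⟩

end IsRookReduced

theorem exists_triangularEquiv_rookMatrix [Fintype n] [LinearOrder n] (A : Matrix (Fin m) n K) :
    ∃ S, IsRookPlacement S ∧ TriangularEquiv A (rookMatrix K S) := by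
  have key : ∀ k ≤ m, ∃ S M, TriangularEquiv A M ∧ IsRookReduced k S M := by
    intro k hk
    induction k with
    | zero => exact ⟨∅, A, .refl A, .zero A⟩
    | succ k ih =>
      obtain ⟨S, M, hAM, hM⟩ := ih (by omega)
      obtain ⟨S', N, hMN, hN⟩ := hM.exists_succ (by omega)
      exact ⟨S', N, hAM.trans hMN, hN⟩
  obtain ⟨S, M, hAM, hM⟩ := key m le_rfl
  exact ⟨S, hM.isRookPlacement, hM.eq_rookMatrix ▸ hAM⟩

end Reduction

/-- `rk(A_{[p,q]}) = rk(B_{[p,q]})` for all `1 ≤ p ≤ m`, `1 ≤ q ≤ n` iff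
`B = λ A μ` for an invertible lower triangular `λ` and an invertible upper
triangular `μ`. -/
theorem rank_eq_iff_triangular_equiv {m n : ℕ} (A B : Matrix (Fin m) (Fin n) ℝ) :
    (∀ (p q : ℕ) (_ : 1 ≤ p) (_ : 1 ≤ q) (hp : p ≤ m) (hq : q ≤ n),
        (ulSub A p q hp hq).rank = (ulSub B p q hp hq).rank) ↔
    ∃ (L : Matrix (Fin m) (Fin m) ℝ) (U : Matrix (Fin n) (Fin n) ℝ),
      (∀ i j : Fin m, i < j → L i j = 0) ∧
      (∀ i j : Fin n, j < i → U i j = 0) ∧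
      IsUnit L.det ∧ IsUnit U.det ∧ B = L * A * U := by
  refine ⟨fun h => ?_, fun ⟨L, U, hL, hU, hLd, hUd, hB⟩ p q _ _ hp hq => ?_⟩
  · obtain ⟨S, hS, hAS⟩ := exists_triangularEquiv_rookMatrix A
    obtain ⟨T, hT, hBT⟩ := exists_triangularEquiv_rookMatrix B
    have hST : S = T := eq_of_cornerCount_eq fun p q hp hq => by
      rcases p.eq_zero_or_pos with rfl | hp₀
      · simp [cornerCount]
      rcases q.eq_zero_or_pos with rfl | hq₀
      · simp [cornerCount]
      rw [← hS.rank_submatrix_castLE (R := ℝ) hp hq, hAS.rank_submatrix_castLE,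
        ← hT.rank_submatrix_castLE (R := ℝ) hp hq, hBT.rank_submatrix_castLE]
      exact h p q hp₀ hq₀ hp hq
    obtain ⟨L, U, hL, hU, hLd, hUd, hB⟩ := hAS.trans (hST ▸ hBT.symm)
    exact ⟨L, U, fun i j hij => hL hij, fun i j hij => hU hij, hLd, hUd, hB⟩
  · have hAB : TriangularEquiv A B :=
      ⟨L, U, fun i j hij => hL i j hij, fun i j hij => hU i j hij, hLd, hUd, hB⟩
    exact (hAB.rank_submatrix_castLE hp hq).symm
end

section
/- Let ω be an m×n partial permutation, (α,β) ∈ D(ω) with k := rk(ω_{[α,β]}) ≥ 1, and let R(α,β) = {r₁ < ⋯ < r_k} be the rows above α containing a 1 of ω in a column left of β, and C(α,β) = {ω̃(r₁), …, ω̃(r_k)} the corresponding columns. If A = λωμ for some invertible lower triangular λ ∈ M_{m,m}(ℝ) and invertible upper triangular μ ∈ M_{n,n}(ℝ), then the k×k submatrix A|_{R(α,β), C(α,β)} has nonzero determinant; in fact |det(A|_{R(α,β), C(α,β)})| = |det(λ|_{R,R})| · |det(μ|_{C,C})| where λ|_{R,R} and μ|_{C,C} are the principal submatrices of λ and μ on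 the index sets R(α,β) and C(α,β). -/
attribute [local instance] Classical.propDecidable

/-! Since `L` is lower and `U` upper triangular, the entry `(L ω U) r c` only involves the ones
of `ω` in rows `≤ r` and columns `≤ c`; for `r ∈ R(α,β)` and `c ∈ C(α,β)` all of these lie in
`R(α,β) × C(α,β)`. Hence `A|_{R,C} = L|_{R,R} ⬝ ω|_{R,C} ⬝ U|_{C,C}`, where the middle factor is a
permutation matrix and the outer factors are triangular with diagonals taken from the nonzero
diagonals of `L` and `U`. -/

open Function

namespace Matrix

variable {m n ι κ R : Type*} [Fintype m] [Fintype n] [LinearOrder m] [LinearOrder n]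

theorem submatrix_mul_mul_of_isLowerTriangular_of_isUpperTriangular [CommSemiring R]
    {L : Matrix m m R} {W : Matrix m n R} {U : Matrix n n R}
    (hL : L.IsLowerTriangular) (hU : U.IsUpperTriangular)
    [Fintype ι] [Fintype κ] {e : ι → m} {f : κ → n} (he : Injective e) (hf : Injective f)
    (hclosed : ∀ a b i j, i ≤ e a → j ≤ f b → W i j ≠ 0 → i ∈ Set.range e ∧ j ∈ Set.range f) :
    (L * W * U).submatrix e f = L.submatrix e e * W.submatrix e f * U.submatrix f f := by
  ext a b
  simp only [submatrix_apply, mul_apply]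
  refine (Fintype.sum_of_injective f hf _ _ (fun j hjf => ?_) (fun y => ?_)).symm
  · rw [Finset.sum_mul]
    refine Finset.sum_eq_zero fun i _ => ?_
    rcases lt_or_ge (e a) i with hi | hi
    · rw [hL hi, zero_mul, zero_mul]
    rcases lt_or_ge (f b) j with hj | hj
    · rw [hU hj, mul_zero]
    by_cases hW : W i j = 0
    · rw [hW, mul_zero, zero_mul]
    exact absurd (hclosed a b i j hi hj hW).2 hjf
  · congr 1
    refine Fintype.sum_of_injective e he _ _ (fun i hie => ?_) (fun x => rfl)
    rcases lt_or_ge (e a) i with hi | hi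
    · rw [hL hi, zero_mul]
    by_cases hW : W i (f y) = 0
    · rw [hW, mul_zero]
    exact absurd (hclosed a y i (f y) hi le_rfl hW).1 hie

variable [DecidableEq m] [CommRing R] [IsDomain R] [Fintype ι] [DecidableEq ι] [LinearOrder ι]
  {M : Matrix m m R} {e : ι → m}

theorem det_submatrix_ne_zero_of_isUpperTriangular (hM : M.IsUpperTriangular) (hdet : M.det ≠ 0)
    (he : StrictMono e) : (M.submatrix e e).det ≠ 0 := by
  have hsub : (M.submatrix e e).IsUpperTriangular := fun _ _ h => hM (he h)
  rw [det_of_isUpperTriangular hsub]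
  rw [det_of_isUpperTriangular hM, Finset.prod_ne_zero_iff] at hdet
  exact Finset.prod_ne_zero_iff.2 fun a _ => hdet (e a) (Finset.mem_univ _)

theorem det_submatrix_ne_zero_of_isLowerTriangular (hM : M.IsLowerTriangular) (hdet : M.det ≠ 0)
    (he : StrictMono e) : (M.submatrix e e).det ≠ 0 := by
  have hsub : (M.submatrix e e).IsLowerTriangular := fun _ _ h => hM (he h)
  rw [det_of_isLowerTriangular _ hsub]
  rw [det_of_isLowerTriangular _ hM, Finset.prod_ne_zero_iff] at hdet
  exact Finset.prod_ne_zero_iff.2 fun a _ => hdet (e a) (Finset.mem_univ _)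

end Matrix

namespace IsPartialPerm

variable {m n k : ℕ} {ω : Matrix (Fin m) (Fin n) ℝ}

theorem submatrix (hω : IsPartialPerm ω) {e : Fin k → Fin m} {f : Fin k → Fin n}
    (he : Injective e) (hf : Injective f) : IsPartialPerm (ω.submatrix e f) :=
  ⟨fun a b => hω.1 (e a) (f b), fun _ _ _ h h' => hf (hω.2.1 _ _ _ h h'),
    fun _ _ _ h h' => he (hω.2.2 _ _ _ h h')⟩

theorem exists_eq_permMatrix {W : Matrix (Fin k) (Fin k) ℝ} (hW : IsPartialPerm W)
    (hrow : ∀ a, ∃ b, W a b = 1) : ∃ τ : Equiv.Perm (Fin k), W = τ.permMatrix ℝ := by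
  choose g hg using hrow
  have hinj : Injective g := fun a a' h => hW.2.2 a a' (g a) (hg a) (h ▸ hg a')
  refine ⟨Equiv.ofBijective g hinj.bijective_of_finite, ?_⟩
  ext a b
  simp only [Equiv.Perm.permMatrix, PEquiv.toMatrix_apply]
  by_cases hb : g a = b
  · simp [hb ▸ hg a, hb]
  · simp only [Equiv.toPEquiv_apply, Equiv.ofBijective_apply, Option.mem_def, Option.some.injEq, hb,
      if_false]
    exact (hW.1 a b).resolve_right fun h => hb (hW.2.1 a _ _ (hg a) h)

end IsPartialPerm

section RotheSets

variable {m n : ℕ} {ω : Matrix (Fin m) (Fin n) ℝ} {α : Fin m} {β : Fin n}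

theorem mem_RSet_and_mem_CSet_of_le (hω : IsPartialPerm ω) {r i : Fin m} {c j : Fin n}
    (hr : r ∈ RSet ω α β) (hc : c ∈ CSet ω α β) (hi : i ≤ r) (hj : j ≤ c) (hij : ω i j ≠ 0) :
    i ∈ RSet ω α β ∧ j ∈ CSet ω α β := by
  simp only [RSet, CSet, Finset.mem_filter, Finset.mem_univ, true_and] at hr hc ⊢
  have h1 : ω i j = 1 := (hω.1 i j).resolve_left hij
  exact ⟨⟨hi.trans_lt hr.1, j, hj.trans_lt hc.1, h1⟩, hj.trans_lt hc.1, i, hi.trans_lt hr.1, h1⟩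

theorem exists_mem_CSet_of_mem_RSet {r : Fin m} (hr : r ∈ RSet ω α β) :
    ∃ c ∈ CSet ω α β, ω r c = 1 := by
  simp only [RSet, CSet, Finset.mem_filter, Finset.mem_univ, true_and] at hr ⊢
  obtain ⟨hrα, c, hcβ, hrc⟩ := hr
  exact ⟨c, ⟨hcβ, r, hrα, hrc⟩, hrc⟩

end RotheSets

theorem det_restriction_ne_zero_general {m n : ℕ}
    (ω : Matrix (Fin m) (Fin n) ℝ) (hω : IsPartialPerm ω)
    (α : Fin m) (β : Fin n)
    (k : ℕ)
    (hR : (RSet ω α β).card = k) (hC : (CSet ω α β).card = k)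
    (L : Matrix (Fin m) (Fin m) ℝ) (U : Matrix (Fin n) (Fin n) ℝ)
    (hL : ∀ i j : Fin m, i < j → L i j = 0) (hLdet : IsUnit L.det)
    (hU : ∀ i j : Fin n, j < i → U i j = 0) (hUdet : IsUnit U.det)
    (A : Matrix (Fin m) (Fin n) ℝ) (hA : A = L * ω * U) :
    |(Matrix.of fun a b : Fin k =>
        A ((RSet ω α β).orderIsoOfFin hR a : Fin m)
          ((CSet ω α β).orderIsoOfFin hC b : Fin n)).det| =
      |(Matrix.of fun a b : Fin k =>
          L ((RSet ω α β).orderIsoOfFin hR a : Fin m)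
            ((RSet ω α β).orderIsoOfFin hR b : Fin m)).det| *
      |(Matrix.of fun a b : Fin k =>
          U ((CSet ω α β).orderIsoOfFin hC a : Fin n)
            ((CSet ω α β).orderIsoOfFin hC b : Fin n)).det| ∧
    (Matrix.of fun a b : Fin k =>
        A ((RSet ω α β).orderIsoOfFin hR a : Fin m)
          ((CSet ω α β).orderIsoOfFin hC b : Fin n)).det ≠ 0 := by
  have hLtri : L.IsLowerTriangular := fun i j => hL i j
  have hUtri : U.IsUpperTriangular := fun i j => hU i j
  set e := (RSet ω α β).orderEmbOfFin hR
  set f := (CSet ω α β).orderEmbOfFin hC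
  have hclosed : ∀ a b i j, i ≤ e a → j ≤ f b → ω i j ≠ 0 →
      i ∈ Set.range e ∧ j ∈ Set.range f := by
    simp only [e, f, Finset.range_orderEmbOfFin, Finset.mem_coe]
    exact fun a b i j => mem_RSet_and_mem_CSet_of_le hω (Finset.orderEmbOfFin_mem _ _ a)
      (Finset.orderEmbOfFin_mem _ _ b)
  have hfactor : A.submatrix e f = L.submatrix e e * ω.submatrix e f * U.submatrix f f :=
    hA ▸ Matrix.submatrix_mul_mul_of_isLowerTriangular_of_isUpperTriangular hLtri hUtri
      e.injective f.injective hclosed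
  have hrow : ∀ a, ∃ b, ω.submatrix e f a b = 1 := fun a => by
    obtain ⟨c, hc, hrc⟩ := exists_mem_CSet_of_mem_RSet (Finset.orderEmbOfFin_mem _ hR a)
    obtain ⟨b, rfl⟩ : c ∈ Set.range f := by simpa [f, Finset.range_orderEmbOfFin] using hc
    exact ⟨b, hrc⟩
  obtain ⟨τ, hτ⟩ := (hω.submatrix e.injective f.injective).exists_eq_permMatrix hrow
  have hdet : (A.submatrix e f).det =
      (L.submatrix e e).det * Equiv.Perm.sign τ * (U.submatrix f f).det := by
    rw [hfactor, Matrix.det_mul, Matrix.det_mul, hτ, Matrix.det_permutation]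
  have hLe := Matrix.det_submatrix_ne_zero_of_isLowerTriangular hLtri hLdet.ne_zero e.strictMono
  have hUf := Matrix.det_submatrix_ne_zero_of_isUpperTriangular hUtri hUdet.ne_zero f.strictMono
  change |(A.submatrix e f).det| = |(L.submatrix e e).det| * |(U.submatrix f f).det| ∧
    (A.submatrix e f).det ≠ 0
  rw [hdet, abs_mul, abs_mul, abs_unit_intCast, mul_one]
  exact ⟨rfl, mul_ne_zero (mul_ne_zero hLe (by simp)) hUf⟩

/-- for `(α,β)` in the Rothe diagram of `ω` with `k = rk(ω_{[α,β]}) ≥ 1`,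
and `A = λ ω μ` with `λ` lower triangular invertible and `μ` upper triangular
invertible, the `k × k` submatrix of `A` on rows `R(α,β)` and columns `C(α,β)` has
`|det| = |det λ|_{R,R}| ⬝ |det μ|_{C,C}|`, and in particular nonzero determinant. -/
theorem det_restriction_ne_zero {m n : ℕ}
    (ω : Matrix (Fin m) (Fin n) ℝ) (hω : IsPartialPerm ω)
    (σ : Equiv.Perm (Fin (m + n)))
    (hext : ∀ (i : Fin m) (j : Fin n), ω i j = 1 ↔ σ (rowIdx i) = colIdx j)
    (h1 : ∀ (i : Fin (m + n)) (h : i.val + 1 < m + n), m ≤ i.val → σ i < σ ⟨i.val + 1, h⟩)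
    (h2 : ∀ (j : Fin (m + n)) (h : j.val + 1 < m + n), n ≤ j.val →
      σ.symm j < σ.symm ⟨j.val + 1, h⟩)
    (α : Fin m) (β : Fin n)
    (hD : colIdx β < σ (rowIdx α) ∧ rowIdx α < σ.symm (colIdx β))
    (k : ℕ) (hk1 : 1 ≤ k)
    (hkdef : k = (ulSub ω (α.val + 1) (β.val + 1) α.isLt β.isLt).rank)
    (hR : (RSet ω α β).card = k) (hC : (CSet ω α β).card = k)
    (L : Matrix (Fin m) (Fin m) ℝ) (U : Matrix (Fin n) (Fin n) ℝ)
    (hL : ∀ i j : Fin m, i < j → L i j = 0) (hLdet : IsUnit L.det)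
    (hU : ∀ i j : Fin n, j < i → U i j = 0) (hUdet : IsUnit U.det)
    (A : Matrix (Fin m) (Fin n) ℝ) (hA : A = L * ω * U) :
    |(Matrix.of fun a b : Fin k =>
        A ((RSet ω α β).orderIsoOfFin hR a : Fin m)
          ((CSet ω α β).orderIsoOfFin hC b : Fin n)).det| =
      |(Matrix.of fun a b : Fin k =>
          L ((RSet ω α β).orderIsoOfFin hR a : Fin m)
            ((RSet ω α β).orderIsoOfFin hR b : Fin m)).det| *
      |(Matrix.of fun a b : Fin k =>
          U ((CSet ω α β).orderIsoOfFin hC a : Fin n)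
            ((CSet ω α β).orderIsoOfFin hC b : Fin n)).det| ∧
    (Matrix.of fun a b : Fin k =>
        A ((RSet ω α β).orderIsoOfFin hR a : Fin m)
          ((CSet ω α β).orderIsoOfFin hC b : Fin n)).det ≠ 0 :=
  det_restriction_ne_zero_general ω hω α β k hR hC L U hL hLdet hU hUdet A hA
end

section
/- Let σ ∈ S_n be a permutation different from the identity, let l = min{i : σ(i) > σ(i+1)}, and for nonzero reals y₁, y₂, y₃ let σ̂(y₁,y₂,y₃) be the (n+1)×(n+1) matrix equal to the permutation matrix of σ extended by a zero last row and column, plus y₁E_{l,n+1} + y₂E_{n+1,σ(l)} + y₁y₂E_{n+1,n+1} + y₃E_{l+1,σ(l)}, where E_{i,j} is the matrix unit. Then the derivative d/dt|_{t=0} det(σ̂(y₁,y₂,y₃) + tE_{i,j}) equals: det(σ) if (i,j) = (n+1, n+1); −y₁ det(σ) if (i,j) = (n+1, σ(l)); y₁y₃ det(σ) if (i,j) = (n+1, σ(l+1)); −y₂ det(σ) if (i,j) = (l, n+1); y₁y₂ det(σ) if (i,j) = (l, σ(l)); −y₁y₂y₃ det(σ) if (i,j) = (l, σ(l+1)); and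 0 otherwise. -/
/-!
Along `t ↦ det (A + t • E_{ij})` only row `i` moves, and linearly, so the derivative is the
cofactor `det (A with row i replaced by e_j)`. In `σ̂` the last row is `y₂` times row `l`;
hence cofactors along rows other than `l` and `n + 1` vanish, and a row swap turns the row-`l`
cofactor into `-y₂` times the last-row one. The last-row cofactor `w ↦ det (σ̂ with last row w)`
is a linear form vanishing on all other rows of `σ̂`: on row `l = e_{σ(l)} + y₁ e_{n+1}` and
row `l + 1 = e_{σ(l+1)} + y₃ e_{σ(l)}` this gives its values at `e_{σ(l)}` and `e_{σ(l+1)}`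
from the one at `e_{n+1}`, which is `det σ` after two row reductions.
-/

/-- The matrix `σ̂(y₁,y₂,y₃)`: the permutation matrix of `σ` (rows `e_{σ(1)},…,e_{σ(n)}`)
extended by a zero last row and column, plus
`y₁ E_{l,n+1} + y₂ E_{n+1,σ(l)} + y₁y₂ E_{n+1,n+1} + y₃ E_{l+1,σ(l)}`. -/
def shat {n : ℕ} (σ : Equiv.Perm (Fin n)) (l : Fin n) (hl : l.val + 1 < n)
    (y₁ y₂ y₃ : ℝ) : Matrix (Fin (n + 1)) (Fin (n + 1)) ℝ :=
  (Matrix.of fun i j : Fin (n + 1) =>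
    if h : i.val < n ∧ j.val < n then
      (if (σ ⟨i.val, h.1⟩).val = j.val then (1 : ℝ) else 0)
    else 0)
  + Matrix.single l.castSucc (Fin.last n) y₁
  + Matrix.single (Fin.last n) (σ l).castSucc y₂
  + Matrix.single (Fin.last n) (Fin.last n) (y₁ * y₂)
  + Matrix.single (Fin.castSucc ⟨l.val + 1, hl⟩) (σ l).castSucc y₃

open Matrix Equiv

namespace Matrix

variable {R ι : Type*} [CommRing R] [Fintype ι] [DecidableEq ι]

theorem det_add_smul_single (A : Matrix ι ι R) (i j : ι) (t : R) :
    (A + t • single i j 1).det = A.det + t * (A.updateRow i (Pi.single j 1)).det := by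
  have hrow : A + t • single i j 1 = A.updateRow i (A i + t • Pi.single j 1) := by
    ext a b
    by_cases ha : a = i
    · subst ha
      by_cases hb : b = j
      · simp [hb]
      · simp [hb, Ne.symm hb]
    · simp [ha, Ne.symm ha]
  rw [hrow, det_updateRow_add, det_updateRow_smul, updateRow_eq_self]

theorem det_eq_det_updateRow_of_eq_add_smul {M : Matrix ι ι R} {r s : ι} (hrs : r ≠ s)
    {u : ι → R} {c : R} (h : M r = u + c • M s) : M.det = (M.updateRow r u).det := by
  rw [← det_updateRow_add_smul_self (M.updateRow r u) hrs c, updateRow_idem,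
    updateRow_self, updateRow_ne hrs.symm, ← h, updateRow_eq_self]

theorem det_eq_zero_of_row_eq_smul {M : Matrix ι ι R} {r s : ι} (hrs : r ≠ s) {c : R}
    (h : M r = c • M s) : M.det = 0 := by
  rw [← updateRow_eq_self M r, h, det_updateRow_smul, det_updateRow_eq_zero hrs.symm, mul_zero]

/-- The row pattern of `shat σ l hl y₁ y₂ y₃`, with `τ = σ.castSucc`, `a = l`, `b = l + 1` and
`e = Fin.last n`. -/
structure HasShatRows (A : Matrix ι ι R) (τ : Perm ι) (a b e : ι) (y₁ y₂ y₃ : R) : Prop where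
  a_ne_b : a ≠ b
  a_ne_e : a ≠ e
  b_ne_e : b ≠ e
  row_of_ne : ∀ k, k ≠ a → k ≠ b → k ≠ e → A k = Pi.single (τ k) 1
  row_a : A a = Pi.single (τ a) 1 + y₁ • Pi.single (τ e) 1
  row_b : A b = Pi.single (τ b) 1 + y₃ • Pi.single (τ a) 1
  row_e : A e = y₂ • A a

namespace HasShatRows

variable {A : Matrix ι ι R} {τ : Perm ι} {a b e : ι} {y₁ y₂ y₃ : R}
  (h : HasShatRows A τ a b e y₁ y₂ y₃)
include h

theorem det_updateRow_of_ne {k : ι} (hka : k ≠ a) (hke : k ≠ e) (w : ι → R) :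
    (A.updateRow k w).det = 0 :=
  det_eq_zero_of_row_eq_smul h.a_ne_e.symm (c := y₂) <| by
    rw [updateRow_ne hke.symm, updateRow_ne hka.symm, h.row_e]

theorem det_updateRow_a (w : ι → R) :
    (A.updateRow a w).det = -y₂ * (A.updateRow e w).det := by
  have hswap : ((A.updateRow a w).updateRow e (A a)).submatrix (Equiv.swap a e) id
      = A.updateRow e w := by
    ext k j
    rcases eq_or_ne k a with rfl | hka
    · simp [h.a_ne_e]
    rcases eq_or_ne k e with rfl | hke
    · simp [h.a_ne_e]
    · simp [swap_apply_of_ne_of_ne hka hke, hka, hke]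
  have hdet := det_permute (Equiv.swap a e) ((A.updateRow a w).updateRow e (A a))
  rw [hswap, Perm.sign_swap h.a_ne_e] at hdet
  rw [← updateRow_eq_self (A.updateRow a w) e, updateRow_ne h.a_ne_e.symm, h.row_e,
    det_updateRow_smul, hdet]
  push_cast
  ring

theorem det_updateRow_e_single_e : (A.updateRow e (Pi.single (τ e) 1)).det = Perm.sign τ := by
  have hperm : ((A.updateRow e (Pi.single (τ e) 1)).updateRow a (Pi.single (τ a) 1)).updateRow b
      (Pi.single (τ b) 1) = τ.permMatrix R := by
    refine ext_row fun k => ?_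
    simp only [row_apply', Perm.permMatrix, PEquiv.toMatrix_toPEquiv_apply]
    rcases eq_or_ne k b with rfl | hkb
    · exact updateRow_self
    rcases eq_or_ne k a with rfl | hka
    · rw [updateRow_ne hkb, updateRow_self]
    rcases eq_or_ne k e with rfl | hke
    · rw [updateRow_ne hkb, updateRow_ne hka, updateRow_self]
    · rw [updateRow_ne hkb, updateRow_ne hka, updateRow_ne hke, h.row_of_ne k hka hkb hke]
  rw [det_eq_det_updateRow_of_eq_add_smul h.a_ne_e (u := Pi.single (τ a) 1) (c := y₁)
      (by rw [updateRow_self, updateRow_ne h.a_ne_e, h.row_a]),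
    det_eq_det_updateRow_of_eq_add_smul h.a_ne_b.symm (u := Pi.single (τ b) 1) (c := y₃)
      (by rw [updateRow_self, updateRow_ne h.a_ne_b.symm, updateRow_ne h.b_ne_e, h.row_b]),
    hperm, det_permutation]

theorem det_updateRow_e_single_a :
    (A.updateRow e (Pi.single (τ a) 1)).det = -y₁ * Perm.sign τ := by
  have := det_updateRow_eq_zero (M := A) h.a_ne_e
  rw [h.row_a, det_updateRow_add, det_updateRow_smul, h.det_updateRow_e_single_e] at this
  linear_combination this

theorem det_updateRow_e_single_b :
    (A.updateRow e (Pi.single (τ b) 1)).det = y₁ * y₃ * Perm.sign τ := by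
  have := det_updateRow_eq_zero (M := A) h.b_ne_e
  rw [h.row_b, det_updateRow_add, det_updateRow_smul, h.det_updateRow_e_single_a] at this
  linear_combination this

theorem det_updateRow_e_single_of_ne {k : ι} (hka : k ≠ a) (hkb : k ≠ b) (hke : k ≠ e) :
    (A.updateRow e (Pi.single (τ k) 1)).det = 0 := by
  rw [← h.row_of_ne k hka hkb hke]
  exact det_updateRow_eq_zero hke

theorem det_updateRow_e_single (j : ι) :
    (A.updateRow e (Pi.single j 1)).det =
      if j = τ e then (Perm.sign τ : R) else if j = τ a then -y₁ * Perm.sign τ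
        else if j = τ b then y₁ * y₃ * Perm.sign τ else 0 := by
  obtain ⟨k, rfl⟩ := τ.surjective j
  simp only [τ.injective.eq_iff]
  rcases eq_or_ne k e with rfl | hke
  · simp [h.det_updateRow_e_single_e]
  rcases eq_or_ne k a with rfl | hka
  · simp [h.det_updateRow_e_single_a, hke]
  rcases eq_or_ne k b with rfl | hkb
  · simp [h.det_updateRow_e_single_b, hke, hka]
  · simp [h.det_updateRow_e_single_of_ne hka hkb hke, hke, hka, hkb]

end HasShatRows

end Matrix

theorem deriv_det_add_smul_single {𝕜 ι : Type*} [NontriviallyNormedField 𝕜] [Fintype ι]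
    [DecidableEq ι] (A : Matrix ι ι 𝕜) (i j : ι) :
    deriv (fun t : 𝕜 => (A + t • single i j 1).det) 0 =
      (A.updateRow i (Pi.single j 1)).det := by
  simp_rw [det_add_smul_single]
  exact ((hasDerivAt_id (0 : 𝕜)).mul_const _).const_add A.det |>.deriv.trans (by simp)

namespace Equiv.Perm

variable {n : ℕ}

def castSucc (σ : Perm (Fin n)) : Perm (Fin (n + 1)) :=
  finSuccEquivLast.symm.permCongr σ.optionCongr

@[simp] theorem castSucc_apply_castSucc (σ : Perm (Fin n)) (i : Fin n) :
    σ.castSucc i.castSucc = (σ i).castSucc := by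
  simp [castSucc, permCongr_apply]

@[simp] theorem castSucc_apply_last (σ : Perm (Fin n)) :
    σ.castSucc (Fin.last n) = Fin.last n := by
  simp [castSucc, permCongr_apply]

@[simp] theorem sign_castSucc (σ : Perm (Fin n)) : sign σ.castSucc = sign σ := by
  simp [castSucc, sign_permCongr]

end Equiv.Perm

section shat

variable {n : ℕ} (σ : Perm (Fin n)) (l : Fin n) (hl : l.val + 1 < n) (y₁ y₂ y₃ : ℝ)

theorem shat_eq : shat σ l hl y₁ y₂ y₃ =
    (σ.castSucc.permMatrix ℝ).updateRow (Fin.last n) 0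
      + single l.castSucc (Fin.last n) y₁ + single (Fin.last n) (σ l).castSucc y₂
      + single (Fin.last n) (Fin.last n) (y₁ * y₂)
      + single (Fin.castSucc ⟨l + 1, hl⟩) (σ l).castSucc y₃ := by
  have hbase : (of fun i j : Fin (n + 1) => if h : i.val < n ∧ j.val < n then
      (if (σ ⟨i.val, h.1⟩).val = j.val then (1 : ℝ) else 0) else 0) =
      (σ.castSucc.permMatrix ℝ).updateRow (Fin.last n) 0 := by
    ext i j
    induction i using Fin.lastCases with
    | last => simp
    | cast k =>
      induction j using Fin.lastCases with
      | last => simp [Fin.castSucc_ne_last]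
      | cast m =>
        simp [updateRow_apply, Perm.permMatrix, PEquiv.toMatrix_apply, Fin.ext_iff, eq_comm,
          k.isLt.ne']
  rw [shat, hbase]

theorem shat_row_castSucc {k : Fin n} (hkl : k ≠ l) (hkl' : k ≠ ⟨l + 1, hl⟩) :
    shat σ l hl y₁ y₂ y₃ k.castSucc = Pi.single (σ k).castSucc 1 := by
  ext j
  simp [shat_eq, updateRow_apply, Perm.permMatrix, PEquiv.toMatrix_apply, Pi.single_apply,
    -Fin.castSucc_mk, Ne.symm hkl, hkl', eq_comm]

theorem shat_row_l : shat σ l hl y₁ y₂ y₃ l.castSucc =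
    Pi.single (σ l).castSucc 1 + y₁ • Pi.single (Fin.last n) 1 := by
  ext j
  simp [shat_eq, updateRow_apply, single_apply, Perm.permMatrix, PEquiv.toMatrix_apply,
    Pi.single_apply, -Fin.castSucc_mk, Fin.ext_iff, eq_comm, l.isLt.ne']

theorem shat_row_succ : shat σ l hl y₁ y₂ y₃ (Fin.castSucc ⟨l + 1, hl⟩) =
    Pi.single (σ ⟨l + 1, hl⟩).castSucc 1 + y₃ • Pi.single (σ l).castSucc 1 := by
  ext j
  simp [shat_eq, updateRow_apply, single_apply, Perm.permMatrix, PEquiv.toMatrix_apply,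
    Pi.single_apply, -Fin.castSucc_mk, Fin.ext_iff, eq_comm, hl.ne']

theorem shat_row_last : shat σ l hl y₁ y₂ y₃ (Fin.last n) =
    y₂ • shat σ l hl y₁ y₂ y₃ l.castSucc := by
  ext j
  simp [shat_eq, updateRow_apply, single_apply, Perm.permMatrix, PEquiv.toMatrix_apply,
    -Fin.castSucc_mk, Fin.ext_iff, eq_comm, l.isLt.ne', hl.ne', mul_add, mul_ite, mul_comm]

theorem hasShatRows_shat :
    (shat σ l hl y₁ y₂ y₃).HasShatRows σ.castSucc l.castSucc (Fin.castSucc ⟨l + 1, hl⟩)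
      (Fin.last n) y₁ y₂ y₃ where
  a_ne_b := by simp [Fin.ext_iff]
  a_ne_e := Fin.castSucc_ne_last l
  b_ne_e := Fin.castSucc_ne_last _
  row_of_ne k hka hkb hke := by
    obtain ⟨k, rfl⟩ := Fin.exists_castSucc_eq.mpr hke
    rw [shat_row_castSucc σ l hl y₁ y₂ y₃ (ne_of_apply_ne _ hka) (ne_of_apply_ne _ hkb),
      Perm.castSucc_apply_castSucc]
  row_a := by rw [shat_row_l, Perm.castSucc_apply_castSucc, Perm.castSucc_apply_last]
  row_b := by rw [shat_row_succ, Perm.castSucc_apply_castSucc, Perm.castSucc_apply_castSucc]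
  row_e := shat_row_last σ l hl y₁ y₂ y₃

end shat

theorem deriv_det_shat_general {n : ℕ} (σ : Equiv.Perm (Fin n))
    (l : Fin n) (hl : l.val + 1 < n)
    (y₁ y₂ y₃ : ℝ)
    (i j : Fin (n + 1)) :
    deriv (fun t : ℝ =>
        (shat σ l hl y₁ y₂ y₃ + t • Matrix.single i j (1 : ℝ)).det) 0 =
      (if i = Fin.last n ∧ j = Fin.last n then ((Equiv.Perm.sign σ : ℤ) : ℝ)
        else if i = Fin.last n ∧ j = (σ l).castSucc then
          -y₁ * ((Equiv.Perm.sign σ : ℤ) : ℝ)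
        else if i = Fin.last n ∧ j = (σ ⟨l.val + 1, hl⟩).castSucc then
          y₁ * y₃ * ((Equiv.Perm.sign σ : ℤ) : ℝ)
        else if i = l.castSucc ∧ j = Fin.last n then
          -y₂ * ((Equiv.Perm.sign σ : ℤ) : ℝ)
        else if i = l.castSucc ∧ j = (σ l).castSucc then
          y₁ * y₂ * ((Equiv.Perm.sign σ : ℤ) : ℝ)
        else if i = l.castSucc ∧ j = (σ ⟨l.val + 1, hl⟩).castSucc then
          -y₁ * y₂ * y₃ * ((Equiv.Perm.sign σ : ℤ) : ℝ)
        else 0) := by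
  have h := hasShatRows_shat σ l hl y₁ y₂ y₃
  rw [deriv_det_add_smul_single]
  rcases eq_or_ne i (Fin.last n) with rfl | hie
  · rw [h.det_updateRow_e_single]
    -- `Fin.castSucc_mk` would unfold `Fin.castSucc ⟨l + 1, hl⟩`, hiding it from
    -- `Perm.castSucc_apply_castSucc`.
    simp [-Fin.castSucc_mk, h.a_ne_e.symm]
  rcases eq_or_ne i l.castSucc with rfl | hia
  · rw [h.det_updateRow_a, h.det_updateRow_e_single]
    simp only [Perm.castSucc_apply_last, Perm.castSucc_apply_castSucc, Perm.sign_castSucc,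
      h.a_ne_e, false_and, true_and, ↓reduceIte]
    split_ifs <;> ring
  · simp [h.det_updateRow_of_ne hia hie, hie, hia]

/-- Lemma 3.1: the (i,j)-cofactor derivatives of `det` at `σ̂(y₁,y₂,y₃)`,
where `l = min{i : σ(i) > σ(i+1)}` for `σ ≠ id`. -/
theorem deriv_det_shat {n : ℕ} (σ : Equiv.Perm (Fin n)) (hσ : σ ≠ 1)
    (l : Fin n) (hl : l.val + 1 < n)
    (hdesc : σ ⟨l.val + 1, hl⟩ < σ l)
    (hmin : ∀ (i : Fin n) (h : i.val + 1 < n), i < l → σ i < σ ⟨i.val + 1, h⟩)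
    (y₁ y₂ y₃ : ℝ) (hy₁ : y₁ ≠ 0) (hy₂ : y₂ ≠ 0) (hy₃ : y₃ ≠ 0)
    (i j : Fin (n + 1)) :
    deriv (fun t : ℝ =>
        (shat σ l hl y₁ y₂ y₃ + t • Matrix.single i j (1 : ℝ)).det) 0 =
      (if i = Fin.last n ∧ j = Fin.last n then ((Equiv.Perm.sign σ : ℤ) : ℝ)
        else if i = Fin.last n ∧ j = (σ l).castSucc then
          -y₁ * ((Equiv.Perm.sign σ : ℤ) : ℝ)
        else if i = Fin.last n ∧ j = (σ ⟨l.val + 1, hl⟩).castSucc then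
          y₁ * y₃ * ((Equiv.Perm.sign σ : ℤ) : ℝ)
        else if i = l.castSucc ∧ j = Fin.last n then
          -y₂ * ((Equiv.Perm.sign σ : ℤ) : ℝ)
        else if i = l.castSucc ∧ j = (σ l).castSucc then
          y₁ * y₂ * ((Equiv.Perm.sign σ : ℤ) : ℝ)
        else if i = l.castSucc ∧ j = (σ ⟨l.val + 1, hl⟩).castSucc then
          -y₁ * y₂ * y₃ * ((Equiv.Perm.sign σ : ℤ) : ℝ)
        else 0) :=
  deriv_det_shat_general σ l hl y₁ y₂ y₃ i j
end

section
/- Let σ ∈ S_n with σ ≠ id, l = min{i : σ(i) > σ(i+1)}, and σ̂ = σ̂(y₁,y₂,y₃) as above with y₁, y₂, y₃ nonzero. Let I = [1,n+1] \ {l, n+1}. Then det(σ̂|_{I, [1,n+1]\{σ(l), n+1\}}) has absolute value 1, det(σ̂|_{I, [1,n+1]\{σ(l+1), n+1\}}) has absolute value |y₃|, and for all other pairs {j₁, j₂}, det(σ̂|_{I, [1,n+1]\{j₁, j₂\}}) = 0. -/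
open Function Finset

theorem Matrix.abs_det_eq_prod_abs_of_apply_eq_ite {ι β R : Type*} [Fintype ι] [DecidableEq ι]
    [DecidableEq β] [CommRing R] [LinearOrder R] [IsStrictOrderedRing R]
    (N : Matrix ι ι R) {c P : ι → β} (hc : Injective c) (hP : Injective P)
    (hPc : ∀ a, ∃ b, c b = P a) (W : ι → R)
    (hN : ∀ a b, N a b = if c b = P a then W a else 0) :
    |N.det| = ∏ a, |W a| := by
  choose p hp using hPc
  have hpinj : Injective p := fun a a' h => hP (by rw [← hp, ← hp, h])
  let e : Equiv.Perm ι := Equiv.ofBijective p hpinj.bijective_of_finite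
  have hNe : N = Matrix.diagonal W * e.permMatrix R := by
    ext a b
    simp [Matrix.diagonal_mul, hN, ← hp, hc.eq_iff, Equiv.Perm.permMatrix, PEquiv.toMatrix, e,
      eq_comm]
  rw [hNe, Matrix.det_mul, Matrix.det_diagonal, Matrix.det_permutation, abs_mul, abs_prod]
  rcases Int.units_eq_one_or (Equiv.Perm.sign e) with h | h <;> simp [h]

theorem exists_apply_eq_of_injective_of_card_add {ι α : Type*} [Fintype ι] [Fintype α]
    [DecidableEq α] {f : ι → α} (hf : Injective f) {s : Finset α} (hfs : ∀ i, f i ∉ s)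
    (hcard : Fintype.card ι + #s = Fintype.card α) {x : α} (hx : x ∉ s) : ∃ i, f i = x := by
  have himage : univ.image f = sᶜ :=
    eq_of_subset_of_card_le (by simpa [subset_iff] using hfs)
      (by rw [card_compl, card_image_of_injective _ hf, card_univ]; omega)
  simpa using (himage ▸ mem_compl.mpr hx : x ∈ univ.image f)

section shat

variable {n : ℕ} (σ : Equiv.Perm (Fin n)) {l : Fin n} (hl : l.val + 1 < n) (y₁ y₂ y₃ : ℝ)

theorem shat_castSucc_apply {k : Fin n} (hk : k ≠ l) (j : Fin (n + 1)) :
    shat σ l hl y₁ y₂ y₃ k.castSucc j =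
      (if j = (σ k).castSucc then 1 else 0) +
      (if k = ⟨l.val + 1, hl⟩ ∧ j = (σ l).castSucc then y₃ else 0) := by
  rcases Fin.eq_castSucc_or_eq_last j with ⟨m, rfl⟩ | rfl
  · simp [shat, Matrix.single_apply, Fin.ext_iff, eq_comm, k.isLt.ne',
      m.isLt.ne']
  · simp [shat, Ne.symm hk, (Fin.castSucc_lt_last _).ne']

theorem shat_castSucc_last {k : Fin n} (hk : k ≠ l) :
    shat σ l hl y₁ y₂ y₃ k.castSucc (Fin.last n) = 0 := by
  simp [shat_castSucc_apply σ hl y₁ y₂ y₃ hk, (Fin.castSucc_lt_last _).ne']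

theorem shat_castSucc_apply_eq_zero {k : Fin n} (hk : k ≠ l) (hk₁ : k ≠ ⟨l.val + 1, hl⟩)
    {j : Fin (n + 1)} (hj : j ≠ (σ k).castSucc) :
    shat σ l hl y₁ y₂ y₃ k.castSucc j = 0 := by
  simp [shat_castSucc_apply σ hl y₁ y₂ y₃ hk, hj, hk₁]

theorem shat_castSucc_apply_of_ne_castSucc_apply {k : Fin n} (hk : k ≠ l) {j : Fin (n + 1)}
    (hj : j ≠ (σ l).castSucc) :
    shat σ l hl y₁ y₂ y₃ k.castSucc j = if j = (σ k).castSucc then 1 else 0 := by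
  simp [shat_castSucc_apply σ hl y₁ y₂ y₃ hk, hj]

theorem shat_castSucc_apply_of_ne_castSucc_apply_succ {k : Fin n} (hk : k ≠ l)
    {j : Fin (n + 1)} (hj : j ≠ (σ ⟨l.val + 1, hl⟩).castSucc) :
    shat σ l hl y₁ y₂ y₃ k.castSucc j =
      if j = (σ (Equiv.swap l ⟨l.val + 1, hl⟩ k)).castSucc then
        (if k = ⟨l.val + 1, hl⟩ then y₃ else 1) else 0 := by
  rw [shat_castSucc_apply σ hl y₁ y₂ y₃ hk]
  by_cases hk₁ : k = ⟨l.val + 1, hl⟩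
  · subst hk₁
    simp [hj]
  · simp [hk₁, Equiv.swap_apply_of_ne_of_ne hk hk₁]

theorem det_submatrix_shat_eq_zero_of_last_mem_range {m : ℕ} {k : Fin m → Fin n}
    (hk : ∀ a, k a ≠ l) {c : Fin m → Fin (n + 1)} {b : Fin m} (hb : c b = Fin.last n) :
    ((shat σ l hl y₁ y₂ y₃).submatrix (Fin.castSucc ∘ k) c).det = 0 :=
  Matrix.det_eq_zero_of_column_eq_zero b fun a => by
    simpa [hb] using shat_castSucc_last σ hl y₁ y₂ y₃ (hk a)

theorem det_submatrix_shat_eq_zero_of_castSucc_notMem_range {m : ℕ} {k : Fin m → Fin n}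
    (hk : ∀ i ≠ l, ∃ a, k a = i) {c : Fin m → Fin (n + 1)} {j : Fin n} (hjl : j ≠ σ l)
    (hjl₁ : j ≠ σ ⟨l.val + 1, hl⟩) (hc : ∀ b, c b ≠ j.castSucc) :
    ((shat σ l hl y₁ y₂ y₃).submatrix (Fin.castSucc ∘ k) c).det = 0 := by
  obtain ⟨a, ha⟩ := hk (σ.symm j) (by simpa [Equiv.symm_apply_eq] using hjl)
  refine Matrix.det_eq_zero_of_row_eq_zero a fun b => ?_
  simp only [Matrix.submatrix_apply, comp_apply, ha]
  exact shat_castSucc_apply_eq_zero σ hl y₁ y₂ y₃ (by simpa [Equiv.symm_apply_eq] using hjl)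
    (by simpa [Equiv.symm_apply_eq] using hjl₁) (by simpa using hc b)

theorem abs_det_submatrix_shat_eq_one {m : ℕ} {k : Fin m → Fin n} (hk : Injective k)
    (hkl : ∀ a, k a ≠ l) {c : Fin m → Fin (n + 1)} (hc : Injective c)
    (hc_surj : ∀ j ∉ ({(σ l).castSucc, Fin.last n} : Finset _), ∃ b, c b = j)
    (hc_mem : ∀ b, c b ∉ ({(σ l).castSucc, Fin.last n} : Finset _)) :
    |((shat σ l hl y₁ y₂ y₃).submatrix (Fin.castSucc ∘ k) c).det| = 1 := by
  refine (Matrix.abs_det_eq_prod_abs_of_apply_eq_ite _ hc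
    ((Fin.castSucc_injective _).comp (σ.injective.comp hk))
    (fun a => hc_surj _ (by simp [hkl a])) (fun _ => 1)
    (fun a b => shat_castSucc_apply_of_ne_castSucc_apply σ hl y₁ y₂ y₃ (hkl a)
      (fun h => hc_mem b (by simp [h])))).trans ?_
  simp

theorem abs_det_submatrix_shat_eq_abs {m : ℕ} {k : Fin m → Fin n} (hk : Injective k)
    (hkl : ∀ a, k a ≠ l) {a₁ : Fin m} (ha₁ : k a₁ = ⟨l.val + 1, hl⟩)
    {c : Fin m → Fin (n + 1)} (hc : Injective c)
    (hc_surj : ∀ j ∉ ({(σ ⟨l.val + 1, hl⟩).castSucc, Fin.last n} : Finset _),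
      ∃ b, c b = j)
    (hc_mem : ∀ b, c b ∉ ({(σ ⟨l.val + 1, hl⟩).castSucc, Fin.last n} : Finset _)) :
    |((shat σ l hl y₁ y₂ y₃).submatrix (Fin.castSucc ∘ k) c).det| = |y₃| := by
  refine (Matrix.abs_det_eq_prod_abs_of_apply_eq_ite _ hc
    ((Fin.castSucc_injective _).comp (σ.injective.comp ((Equiv.injective _).comp hk)))
    (fun a => hc_surj _ (by simp [hkl a, Equiv.swap_apply_eq_iff]))
    (fun a => if k a = ⟨l.val + 1, hl⟩ then y₃ else 1)
    (fun a b => shat_castSucc_apply_of_ne_castSucc_apply_succ σ hl y₁ y₂ y₃ (hkl a)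
      (fun h => hc_mem b (by simp [h])))).trans ?_
  rw [Fintype.prod_eq_single a₁ fun a ha => by simp [← ha₁, hk.ne ha]]
  simp [ha₁]

end shat

theorem Fin.exists_pair_eq_castSucc_last {n : ℕ} {x y : Fin (n + 1)} (hxy : x ≠ y)
    (h : Fin.last n ∈ ({x, y} : Finset _)) :
    ∃ m : Fin n, ({x, y} : Finset _) = {m.castSucc, Fin.last n} := by
  simp only [mem_insert, mem_singleton] at h
  rcases h with rfl | rfl
  · obtain ⟨m, rfl⟩ := Fin.exists_castSucc_eq.mpr hxy.symm
    exact ⟨m, pair_comm _ _⟩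
  · obtain ⟨m, rfl⟩ := Fin.exists_castSucc_eq.mpr hxy
    exact ⟨m, rfl⟩

theorem minor_values_rows_l_last_general {n : ℕ} (σ : Equiv.Perm (Fin n))
    (l : Fin n) (hl : l.val + 1 < n) (y₁ y₂ y₃ : ℝ)
    (r : Fin (n - 1) → Fin (n + 1)) (hr : Function.Injective r)
    (hravoid : ∀ a, r a ≠ l.castSucc ∧ r a ≠ Fin.last n)
    (j₁ j₂ : Fin (n + 1)) (hj : j₁ ≠ j₂)
    (c : Fin (n - 1) → Fin (n + 1)) (hc : Function.Injective c)
    (hcavoid : ∀ a, c a ≠ j₁ ∧ c a ≠ j₂) :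
    (({j₁, j₂} : Finset (Fin (n + 1))) = {(σ l).castSucc, Fin.last n} →
        |((shat σ l hl y₁ y₂ y₃).submatrix r c).det| = 1) ∧
    (({j₁, j₂} : Finset (Fin (n + 1))) = {(σ ⟨l.val + 1, hl⟩).castSucc, Fin.last n} →
        |((shat σ l hl y₁ y₂ y₃).submatrix r c).det| = |y₃|) ∧
    (({j₁, j₂} : Finset (Fin (n + 1))) ≠ {(σ l).castSucc, Fin.last n} →
      ({j₁, j₂} : Finset (Fin (n + 1))) ≠ {(σ ⟨l.val + 1, hl⟩).castSucc, Fin.last n} →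
        ((shat σ l hl y₁ y₂ y₃).submatrix r c).det = 0) := by
  obtain ⟨k, rfl⟩ : ∃ k : Fin (n - 1) → Fin n, r = Fin.castSucc ∘ k :=
    ⟨fun a => (r a).castPred (hravoid a).2, funext fun a => (Fin.castSucc_castPred _ _).symm⟩
  have hk : Injective k := hr.of_comp
  have hkl : ∀ a, k a ≠ l := fun a h => (hravoid a).1 (by simp [h])
  have hcs : ∀ b, c b ∉ ({j₁, j₂} : Finset _) := by simpa using hcavoid
  have hk_surj : ∀ i ≠ l, ∃ a, k a = i := fun i hi =>
    exists_apply_eq_of_injective_of_card_add hk (s := {l}) (by simpa using hkl)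
      (by simp only [Fintype.card_fin, card_singleton]; omega) (by simpa using hi)
  have hc_surj : ∀ j ∉ ({j₁, j₂} : Finset _), ∃ b, c b = j := fun j hj' =>
    exists_apply_eq_of_injective_of_card_add hc hcs
      (by simp only [Fintype.card_fin, card_pair hj]; omega) hj'
  refine ⟨fun hpair => ?_, fun hpair => ?_, fun hne hne₁ => ?_⟩
  · exact abs_det_submatrix_shat_eq_one σ hl y₁ y₂ y₃ hk hkl hc (hpair ▸ hc_surj)
      (hpair ▸ hcs)
  · obtain ⟨a₁, ha₁⟩ := hk_surj ⟨l.val + 1, hl⟩ (by simp [Fin.ext_iff])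
    exact abs_det_submatrix_shat_eq_abs σ hl y₁ y₂ y₃ hk hkl ha₁ hc (hpair ▸ hc_surj)
      (hpair ▸ hcs)
  · by_cases hlast : Fin.last n ∈ ({j₁, j₂} : Finset _)
    · obtain ⟨j, hpair⟩ := Fin.exists_pair_eq_castSucc_last hj hlast
      exact det_submatrix_shat_eq_zero_of_castSucc_notMem_range σ hl y₁ y₂ y₃ (j := j)
        hk_surj (fun h => hne (by rw [hpair, h])) (fun h => hne₁ (by rw [hpair, h]))
        (fun b h => hcs b (by simp [hpair, h]))
    · obtain ⟨b, hb⟩ := hc_surj _ hlast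
      exact det_submatrix_shat_eq_zero_of_last_mem_range σ hl y₁ y₂ y₃ hkl hb

/-- deleting rows `{l, n+1}` from `σ̂(y₁,y₂,y₃)` and columns `{j₁,j₂}`,
the resulting `(n-1) × (n-1)` minor has absolute value `1` if `{j₁,j₂} = {σ(l), n+1}`,
absolute value `|y₃|` if `{j₁,j₂} = {σ(l+1), n+1}`, and vanishes otherwise. The minor
is represented via injective enumerations of the remaining rows and columns. -/
theorem minor_values_rows_l_last {n : ℕ} (σ : Equiv.Perm (Fin n)) (hσ : σ ≠ 1)
    (l : Fin n) (hl : l.val + 1 < n)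
    (hdesc : σ ⟨l.val + 1, hl⟩ < σ l)
    (hmin : ∀ (i : Fin n) (h : i.val + 1 < n), i < l → σ i < σ ⟨i.val + 1, h⟩)
    (y₁ y₂ y₃ : ℝ) (hy₁ : y₁ ≠ 0) (hy₂ : y₂ ≠ 0) (hy₃ : y₃ ≠ 0)
    (r : Fin (n - 1) → Fin (n + 1)) (hr : Function.Injective r)
    (hravoid : ∀ a, r a ≠ l.castSucc ∧ r a ≠ Fin.last n)
    (j₁ j₂ : Fin (n + 1)) (hj : j₁ ≠ j₂)
    (c : Fin (n - 1) → Fin (n + 1)) (hc : Function.Injective c)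
    (hcavoid : ∀ a, c a ≠ j₁ ∧ c a ≠ j₂) :
    (({j₁, j₂} : Finset (Fin (n + 1))) = {(σ l).castSucc, Fin.last n} →
        |((shat σ l hl y₁ y₂ y₃).submatrix r c).det| = 1) ∧
    (({j₁, j₂} : Finset (Fin (n + 1))) = {(σ ⟨l.val + 1, hl⟩).castSucc, Fin.last n} →
        |((shat σ l hl y₁ y₂ y₃).submatrix r c).det| = |y₃|) ∧
    (({j₁, j₂} : Finset (Fin (n + 1))) ≠ {(σ l).castSucc, Fin.last n} →
      ({j₁, j₂} : Finset (Fin (n + 1))) ≠ {(σ ⟨l.val + 1, hl⟩).castSucc, Fin.last n} →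
        ((shat σ l hl y₁ y₂ y₃).submatrix r c).det = 0) :=
  minor_values_rows_l_last_general σ l hl y₁ y₂ y₃ r hr hravoid j₁ j₂ hj c hc hcavoid
end

section
/- Let f = x₁₁ and g = det of the 3×3 matrix of variables (x_{ij}), and let A = A(y₁,y₂,y₃) be the matrix with rows (0, 1, y₁), (1, y₃, 0), (0, y₂, y₁y₂) for nonzero reals y₁, y₂, y₃. Let N₁ = ∇f(A) and N₂ = ∇g(A) be the gradients (as 3×3 matrices of partial derivatives) with respect to the trace inner product ⟨A,B⟩ = tr(AᵀB). Let G be the 2×2 Gram matrix of N₁, N₂. Then G₁₁ = 1, G₁₂ = y₁y₂y₃, G₂₂ = (1+y₂²)(1+y₁²+y₁²y₃²), and det G = 1 + y₁² + y₂² + y₁²y₂² + y₁²y₃² > 0; moreover Hess g(N₁, N₂) = −y₃, Hess g(N₁, N₁) = 0, and Hess g(N₂, N₂) = 0 at A. -/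
open Matrix

/-!
Expanding the determinant along row `i` shows that `det (A + t Eᵢⱼ)` is affine in `t` with slope
the cofactor `adj(A)ⱼᵢ`, so `∇ det = (adj A)ᵀ`, while `∇ x₁₁ = E₁₁`. On each plane `A + sU + tV`
that occurs, `det` is affine in `t` with an `s`-affine slope, so the Hessian is the coefficient
of `s t`.
-/

/-- Gradient of a function of a `3×3` matrix with respect to the trace inner product:
the matrix of partial derivatives. -/
noncomputable def matGrad (F : Matrix (Fin 3) (Fin 3) ℝ → ℝ)
    (A : Matrix (Fin 3) (Fin 3) ℝ) : Matrix (Fin 3) (Fin 3) ℝ :=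
  Matrix.of fun i j => deriv (fun t : ℝ => F (A + t • Matrix.single i j 1)) 0

/-- Hessian of `F` at `A` applied to matrix directions `U, V`:
`Σ (∂²F/∂x_{ab}∂x_{cd})(A) U_{ab} V_{cd}`. -/
noncomputable def matHess (F : Matrix (Fin 3) (Fin 3) ℝ → ℝ)
    (A U V : Matrix (Fin 3) (Fin 3) ℝ) : ℝ :=
  deriv (fun s : ℝ => deriv (fun t : ℝ => F (A + s • U + t • V)) 0) 0

/-- The point `A(y₁,y₂,y₃)`. -/
def Apt (y₁ y₂ y₃ : ℝ) : Matrix (Fin 3) (Fin 3) ℝ :=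
  !![0, 1, y₁; 1, y₃, 0; 0, y₂, y₁ * y₂]

lemma deriv_eq_of_affine {f : ℝ → ℝ} {a b : ℝ} (h : ∀ t, f t = a + t * b) :
    deriv f 0 = b := by
  rw [funext h]
  simp

theorem det_add_smul_single {n R : Type*} [Fintype n] [DecidableEq n] [CommRing R]
    (A : Matrix n n R) (i j : n) (t : R) :
    (A + t • single i j 1).det = A.det + t * adjugate A j i := by
  have hrow : A + t • single i j 1 = A.updateRow i (A i + t • Pi.single j 1) := by
    ext a b
    rcases eq_or_ne a i with rfl | ha
    · rcases eq_or_ne b j with rfl | hb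
      · simp
      · simp [hb, hb.symm]
    · simp [ha, ha.symm]
  rw [hrow, det_updateRow_add, det_updateRow_smul, updateRow_eq_self, adjugate_apply]

theorem matGrad_apply_zero_zero (A : Matrix (Fin 3) (Fin 3) ℝ) :
    matGrad (fun M => M 0 0) A = single 0 0 1 := by
  ext i j
  refine deriv_eq_of_affine (a := A 0 0) fun t => ?_
  by_cases hi : i = 0 <;> by_cases hj : j = 0 <;> simp [hi, hj, eq_comm]

theorem matGrad_det (A : Matrix (Fin 3) (Fin 3) ℝ) : matGrad det A = (adjugate A)ᵀ :=
  Matrix.ext fun i j => deriv_eq_of_affine fun t => det_add_smul_single A i j t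

theorem matHess_eq_of_affine {F : Matrix (Fin 3) (Fin 3) ℝ → ℝ}
    {A U V : Matrix (Fin 3) (Fin 3) ℝ} {b₀ b₁ : ℝ}
    (h : ∀ s t : ℝ, F (A + s • U + t • V) = F (A + s • U) + t * (b₀ + s * b₁)) :
    matHess F A U V = b₁ := by
  have hinner : ∀ s : ℝ, deriv (fun t : ℝ => F (A + s • U + t • V)) 0 = b₀ + s * b₁ :=
    fun s => deriv_eq_of_affine (h s)
  simp only [matHess, hinner]
  exact deriv_eq_of_affine fun _ => rfl

theorem adjugate_Apt_transpose (y₁ y₂ y₃ : ℝ) :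
    (adjugate (Apt y₁ y₂ y₃))ᵀ =
      !![y₁ * y₂ * y₃, -(y₁ * y₂), y₂; 0, 0, 0; -(y₁ * y₃), y₁, -1] := by
  rw [adjugate_fin_three]
  ext i j
  fin_cases i <;> fin_cases j <;> simp [Apt, mul_comm]

theorem gram_and_hessian_computation_general (y₁ y₂ y₃ : ℝ) :
    Matrix.trace ((matGrad (fun M => M 0 0) (Apt y₁ y₂ y₃))ᵀ *
        matGrad (fun M => M 0 0) (Apt y₁ y₂ y₃)) = 1 ∧
    Matrix.trace ((matGrad (fun M => M 0 0) (Apt y₁ y₂ y₃))ᵀ *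
        matGrad Matrix.det (Apt y₁ y₂ y₃)) = y₁ * y₂ * y₃ ∧
    Matrix.trace ((matGrad Matrix.det (Apt y₁ y₂ y₃))ᵀ *
        matGrad Matrix.det (Apt y₁ y₂ y₃)) =
      (1 + y₂ ^ 2) * (1 + y₁ ^ 2 + y₁ ^ 2 * y₃ ^ 2) ∧
    (!![Matrix.trace ((matGrad (fun M => M 0 0) (Apt y₁ y₂ y₃))ᵀ *
          matGrad (fun M => M 0 0) (Apt y₁ y₂ y₃)),
        Matrix.trace ((matGrad (fun M => M 0 0) (Apt y₁ y₂ y₃))ᵀ *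
          matGrad Matrix.det (Apt y₁ y₂ y₃));
        Matrix.trace ((matGrad Matrix.det (Apt y₁ y₂ y₃))ᵀ *
          matGrad (fun M => M 0 0) (Apt y₁ y₂ y₃)),
        Matrix.trace ((matGrad Matrix.det (Apt y₁ y₂ y₃))ᵀ *
          matGrad Matrix.det (Apt y₁ y₂ y₃))] : Matrix (Fin 2) (Fin 2) ℝ).det =
      1 + y₁ ^ 2 + y₂ ^ 2 + y₁ ^ 2 * y₂ ^ 2 + y₁ ^ 2 * y₃ ^ 2 ∧
    (0 : ℝ) < 1 + y₁ ^ 2 + y₂ ^ 2 + y₁ ^ 2 * y₂ ^ 2 + y₁ ^ 2 * y₃ ^ 2 ∧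
    matHess Matrix.det (Apt y₁ y₂ y₃) (matGrad (fun M => M 0 0) (Apt y₁ y₂ y₃))
        (matGrad Matrix.det (Apt y₁ y₂ y₃)) = -y₃ ∧
    matHess Matrix.det (Apt y₁ y₂ y₃) (matGrad (fun M => M 0 0) (Apt y₁ y₂ y₃))
        (matGrad (fun M => M 0 0) (Apt y₁ y₂ y₃)) = 0 ∧
    matHess Matrix.det (Apt y₁ y₂ y₃) (matGrad Matrix.det (Apt y₁ y₂ y₃))
        (matGrad Matrix.det (Apt y₁ y₂ y₃)) = 0 := by
  rw [matGrad_apply_zero_zero, matGrad_det, adjugate_Apt_transpose]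
  refine ⟨?_, ?_, ?_, ?_, by positivity, ?_, ?_, ?_⟩
  · simp
  · simp [trace_fin_three, mul_apply, Fin.sum_univ_three]
  · simp [trace_fin_three, mul_apply, Fin.sum_univ_three]; ring
  · simp [trace_fin_three, mul_apply, Fin.sum_univ_three, det_fin_two_of]; ring
  · exact matHess_eq_of_affine (b₀ := (1 + y₂ ^ 2) * (1 + y₁ ^ 2 + y₁ ^ 2 * y₃ ^ 2))
      fun s t => by simp [det_fin_three, Apt]; ring
  · exact matHess_eq_of_affine (b₀ := y₁ * y₂ * y₃) fun s t => by simp [det_fin_three, Apt]; ring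
  · exact matHess_eq_of_affine (b₀ := (1 + y₂ ^ 2) * (1 + y₁ ^ 2 + y₁ ^ 2 * y₃ ^ 2))
      fun s t => by simp [det_fin_three, Apt]; ring

/-- Gram matrix and Hessian computations for `f = x₁₁` and `g = det` at
`A(y₁,y₂,y₃)`, with `N₁ = ∇f(A)`, `N₂ = ∇g(A)` and the trace inner product
`⟨A,B⟩ = tr(Aᵀ B)`. -/
theorem gram_and_hessian_computation (y₁ y₂ y₃ : ℝ)
    (hy₁ : y₁ ≠ 0) (hy₂ : y₂ ≠ 0) (hy₃ : y₃ ≠ 0) :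
    Matrix.trace ((matGrad (fun M => M 0 0) (Apt y₁ y₂ y₃))ᵀ *
        matGrad (fun M => M 0 0) (Apt y₁ y₂ y₃)) = 1 ∧
    Matrix.trace ((matGrad (fun M => M 0 0) (Apt y₁ y₂ y₃))ᵀ *
        matGrad Matrix.det (Apt y₁ y₂ y₃)) = y₁ * y₂ * y₃ ∧
    Matrix.trace ((matGrad Matrix.det (Apt y₁ y₂ y₃))ᵀ *
        matGrad Matrix.det (Apt y₁ y₂ y₃)) =
      (1 + y₂ ^ 2) * (1 + y₁ ^ 2 + y₁ ^ 2 * y₃ ^ 2) ∧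
    (!![Matrix.trace ((matGrad (fun M => M 0 0) (Apt y₁ y₂ y₃))ᵀ *
          matGrad (fun M => M 0 0) (Apt y₁ y₂ y₃)),
        Matrix.trace ((matGrad (fun M => M 0 0) (Apt y₁ y₂ y₃))ᵀ *
          matGrad Matrix.det (Apt y₁ y₂ y₃));
        Matrix.trace ((matGrad Matrix.det (Apt y₁ y₂ y₃))ᵀ *
          matGrad (fun M => M 0 0) (Apt y₁ y₂ y₃)),
        Matrix.trace ((matGrad Matrix.det (Apt y₁ y₂ y₃))ᵀ *
          matGrad Matrix.det (Apt y₁ y₂ y₃))] : Matrix (Fin 2) (Fin 2) ℝ).det =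
      1 + y₁ ^ 2 + y₂ ^ 2 + y₁ ^ 2 * y₂ ^ 2 + y₁ ^ 2 * y₃ ^ 2 ∧
    (0 : ℝ) < 1 + y₁ ^ 2 + y₂ ^ 2 + y₁ ^ 2 * y₂ ^ 2 + y₁ ^ 2 * y₃ ^ 2 ∧
    matHess Matrix.det (Apt y₁ y₂ y₃) (matGrad (fun M => M 0 0) (Apt y₁ y₂ y₃))
        (matGrad Matrix.det (Apt y₁ y₂ y₃)) = -y₃ ∧
    matHess Matrix.det (Apt y₁ y₂ y₃) (matGrad (fun M => M 0 0) (Apt y₁ y₂ y₃))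
        (matGrad (fun M => M 0 0) (Apt y₁ y₂ y₃)) = 0 ∧
    matHess Matrix.det (Apt y₁ y₂ y₃) (matGrad Matrix.det (Apt y₁ y₂ y₃))
        (matGrad Matrix.det (Apt y₁ y₂ y₃)) = 0 :=
  gram_and_hessian_computation_general y₁ y₂ y₃
end

section
/- Let ω ∈ M_{m,n}(ℝ) be the partial permutation of block form ω = [[I_{r₁}, 0, 0, 0], [0, 0, I_{r₂}, 0], [0, 0, 0, 0]] with row blocks of sizes r₁, r₂, m₁ and column blocks of sizes r₁, n₁, r₂, n₂ (so m = r₁ + r₂ + m₁, n = r₁ + n₁ + r₂ + n₂). Fix Q ∈ X_ω and let U_Q ∈ O(m) be the orthogonal involution which is +1 on the column space C(Q) of Q and −1 on its orthogonal complement. Define Φ_Q: M_{m,n}(ℝ) → M_{m,n}(ℝ) by left multiplication by U_Q. Then Φ_Q maps X̄_ω into X̄_ω: for every A ∈ X_ω and all 1 ≤ p ≤ m, 1 ≤ q ≤ n, rk((U_Q A)_{[p,q]}) ≤ rk(ω_{[p,q]}). -/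
/-- The block partial permutation `[[I_{r₁},0,0,0],[0,0,I_{r₂},0],[0,0,0,0]]`, with row
blocks of sizes `r₁, r₂, m₁` and column blocks of sizes `r₁, n₁, r₂, n₂`. -/
def omegaBlk (r₁ r₂ m₁ n₁ n₂ : ℕ) :
    Matrix (Fin (r₁ + r₂ + m₁)) (Fin (r₁ + n₁ + r₂ + n₂)) ℝ :=
  Matrix.of fun i j =>
    if (i.val < r₁ ∧ j.val = i.val) ∨
        (r₁ ≤ i.val ∧ i.val < r₁ + r₂ ∧ j.val = i.val + n₁) then 1 else 0

/-- Membership in the regular part `X_ω` (upper-left rank equalities). -/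
def memX {m n : ℕ} (ω A : Matrix (Fin m) (Fin n) ℝ) : Prop :=
  ∀ (p q : ℕ) (_ : 1 ≤ p) (_ : 1 ≤ q) (hp : p ≤ m) (hq : q ≤ n),
    (ulSub A p q hp hq).rank = (ulSub ω p q hp hq).rank

/-- The column space `C(Q)` of a matrix `Q`, as a subspace of Euclidean space. -/
noncomputable def colSpace {m n : ℕ} (Q : Matrix (Fin m) (Fin n) ℝ) :
    Submodule ℝ (EuclideanSpace ℝ (Fin m)) :=
  Submodule.span ℝ (Set.range fun j : Fin n =>
    (show EuclideanSpace ℝ (Fin m) from WithLp.toLp 2 fun i => Q i j))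

/-!
For this `ω` the nonzero rows of `ω_{[m,q]}` come first and are distinct unit vectors; hence
`rk(ω_{[p,q]}) = min p (rk ω_{[m,q]})`, and the rank conditions defining `X̄_ω` only constrain
the leading column blocks `A_{[m,q]}`, whose ranks left multiplication cannot increase.
-/

open Matrix Finset

theorem Matrix.rank_of_ite_eq_card {m n K : Type*} [Fintype m] [Fintype n]
    [DecidableEq m] [Field K] (R : m → n → Prop) [DecidableRel R]
    (hR : ∀ i i' j, R i j → R i' j → i = i') :
    (Matrix.of fun i j => if R i j then (1 : K) else 0).rank = #{i | ∃ j, R i j} := by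
  set s : Finset m := {i | ∃ j, R i j}
  set M : Matrix m n K := Matrix.of fun i j => if R i j then (1 : K) else 0
  refine le_antisymm (M.rank_le_card_of_support_subset s fun i hi => ?_) ?_
  · by_contra hs
    refine hi (funext fun j => if_neg fun hij => hs ?_)
    exact mem_filter.2 ⟨mem_univ _, j, hij⟩
  · choose pivot hpivot using fun i (hi : i ∈ s) => (mem_filter.1 hi).2
    have hsub : M.submatrix (Subtype.val : s → m) (fun i : s => pivot i i.2) = 1 := by
      ext i i'
      simp only [M, submatrix_apply, of_apply, one_apply]
      exact if_congr ⟨fun h => Subtype.ext (hR _ _ _ h (hpivot i' i'.2)),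
        fun h => h ▸ hpivot i i.2⟩ rfl rfl
    calc #s = (1 : Matrix s s K).rank := by rw [rank_one, Fintype.card_coe]
      _ ≤ M.rank := hsub ▸ M.rank_submatrix_le _ _

/-- The columns of `ω` containing a `1` are `j < r₁` and `r₁ + n₁ ≤ j < r₁ + n₁ + r₂`, so the
first `q` columns meet exactly the first `min r₁ q + (min (r₁ + r₂) (q - n₁) - r₁)` rows. -/
theorem rank_ulSub_omegaBlk (r₁ r₂ m₁ n₁ n₂ : ℕ) {p q : ℕ}
    (hp : p ≤ r₁ + r₂ + m₁) (hq : q ≤ r₁ + n₁ + r₂ + n₂) :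
    (ulSub (omegaBlk r₁ r₂ m₁ n₁ n₂) p q hp hq).rank
      = min p (min r₁ q + (min (r₁ + r₂) (q - n₁) - r₁)) := by
  have hR : ∀ (i i' : Fin p) (j : Fin q),
      ((i.val < r₁ ∧ j.val = i.val) ∨ (r₁ ≤ i.val ∧ i.val < r₁ + r₂ ∧ j.val = i.val + n₁)) →
      ((i'.val < r₁ ∧ j.val = i'.val) ∨ (r₁ ≤ i'.val ∧ i'.val < r₁ + r₂ ∧ j.val = i'.val + n₁)) →
      i = i' := by
    intro i i' j hi hi'
    ext
    omega
  refine (Matrix.rank_of_ite_eq_card _ hR).trans ?_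
  rw [← Fin.card_filter_val_lt]
  congr 1
  ext i
  simp only [mem_filter, mem_univ, true_and]
  constructor
  · rintro ⟨j, hj⟩
    omega
  · intro hi
    by_cases hi₁ : i.val < r₁
    · exact ⟨⟨i.val, by omega⟩, Or.inl ⟨hi₁, rfl⟩⟩
    · exact ⟨⟨i.val + n₁, by omega⟩, Or.inr ⟨by omega, by omega, rfl⟩⟩

theorem rank_ulSub_mul_le {m n : ℕ} (U : Matrix (Fin m) (Fin m) ℝ) (A : Matrix (Fin m) (Fin n) ℝ)
    {p q : ℕ} (hp : p ≤ m) (hq : q ≤ n) :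
    (ulSub (U * A) p q hp hq).rank ≤ min p (ulSub A m q le_rfl hq).rank := by
  have hsub : ulSub (U * A) p q hp hq = (U * ulSub A m q le_rfl hq).submatrix (Fin.castLE hp) id :=
    rfl
  refine le_min (rank_le_height _) ?_
  rw [hsub]
  exact (rank_submatrix_le _ _ _).trans (rank_mul_le_right _ _)

theorem reflection_maps_into_Xbar_general (r₁ r₂ m₁ n₁ n₂ : ℕ)
    (U : Matrix (Fin (r₁ + r₂ + m₁)) (Fin (r₁ + r₂ + m₁)) ℝ) :
    ∀ A, memX (omegaBlk r₁ r₂ m₁ n₁ n₂) A →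
      ∀ (p q : ℕ) (_ : 1 ≤ p) (_ : 1 ≤ q)
        (hp : p ≤ r₁ + r₂ + m₁) (hq : q ≤ r₁ + n₁ + r₂ + n₂),
        (ulSub (U * A) p q hp hq).rank ≤
          (ulSub (omegaBlk r₁ r₂ m₁ n₁ n₂) p q hp hq).rank := by
  intro A hA p q hp₁ hq₁ hp hq
  have hcols := hA _ q (hp₁.trans hp) hq₁ le_rfl hq
  have hUA := rank_ulSub_mul_le U A hp hq
  rw [hcols, rank_ulSub_omegaBlk] at hUA
  rw [rank_ulSub_omegaBlk]
  omega

/-- Lemma 5.5: left multiplication by the reflection `U_Q` through the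
column space of `Q ∈ X_ω` maps `X_ω` into `X̄_ω`. -/
theorem reflection_maps_into_Xbar (r₁ r₂ m₁ n₁ n₂ : ℕ)
    (Q : Matrix (Fin (r₁ + r₂ + m₁)) (Fin (r₁ + n₁ + r₂ + n₂)) ℝ)
    (hQ : memX (omegaBlk r₁ r₂ m₁ n₁ n₂) Q)
    (U : Matrix (Fin (r₁ + r₂ + m₁)) (Fin (r₁ + r₂ + m₁)) ℝ)
    (hU1 : ∀ v : EuclideanSpace ℝ (Fin (r₁ + r₂ + m₁)), v ∈ colSpace Q →
      U.mulVec (fun i => v i) = fun i => v i)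
    (hU2 : ∀ v : EuclideanSpace ℝ (Fin (r₁ + r₂ + m₁)), v ∈ (colSpace Q)ᗮ →
      U.mulVec (fun i => v i) = fun i => -(v i)) :
    ∀ A, memX (omegaBlk r₁ r₂ m₁ n₁ n₂) A →
      ∀ (p q : ℕ) (_ : 1 ≤ p) (_ : 1 ≤ q)
        (hp : p ≤ r₁ + r₂ + m₁) (hq : q ≤ r₁ + n₁ + r₂ + n₂),
        (ulSub (U * A) p q hp hq).rank ≤
          (ulSub (omegaBlk r₁ r₂ m₁ n₁ n₂) p q hp hq).rank :=
  reflection_maps_into_Xbar_general r₁ r₂ m₁ n₁ n₂ U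
end

section
/- Consider the partial permutation ω ∈ M_{3,3}(ℝ) with ω₁₂ = ω₃₁ = 1 and all other entries 0. The matrix Schubert variety X̄_ω = {A ∈ M_{3,3}(ℝ) : A₁₁ = A₂₁ = 0 and A₁₂A₂₃ − A₂₂A₁₃ = 0} is isometric (as a subset of ℝ⁹ ≅ M_{3,3}(ℝ)) to Cl₃ × ℝ³ ⊂ ℝ⁴ × ℝ³ ⊂ ℝ⁹, where Cl₃ = {(a,b,c,d) ∈ ℝ⁴ : ad − bc = 0} is the cone over the Clifford torus. -/
/-- The partial permutation with `ω₁₂ = ω₃₁ = 1`. -/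
def om19 : Matrix (Fin 3) (Fin 3) ℝ := !![0, 1, 0; 0, 0, 0; 1, 0, 0]

/-!
The rank conditions defining `X̄_ω` reduce to minors: `rk A_{[2,1]} ≤ 0` forces
`A₁₁ = A₂₁ = 0`, and `rk A_{[2,3]} ≤ 1` kills the minor `A₁₂A₂₃ − A₂₂A₁₃`. Conversely, these
equations give `rk A_{[2,3]} ≤ 1` and `det A = A₃₁ (A₁₂A₂₃ − A₂₂A₁₃) = 0`; since ranks of
upper-left blocks grow with the block, this bounds every `rk A_{[p,q]}` by the corresponding rank
for `ω`, which a nonzero minor of `ω` bounds from below. The isometry is a permutation of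
coordinates sending the four entries of the minor to `ℝ⁴`, the third row to `ℝ³` and the two
vanishing entries to the last two coordinates.
-/

theorem Matrix.rank_lt_card_iff_det_eq_zero {K n : Type*} [Field K] [Fintype n] [DecidableEq n]
    (A : Matrix n n K) : A.rank < Fintype.card n ↔ A.det = 0 := by
  refine ⟨fun h => by_contra fun hdet => h.ne (rank_of_det_ne_zero hdet), fun hdet => ?_⟩
  obtain ⟨v, hv, hAv⟩ := Matrix.exists_mulVec_eq_zero_iff.2 hdet
  refine A.rank_le_card_height.lt_of_ne fun hrank => hv ?_
  have hsurj : Function.Surjective A.mulVecLin := by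
    rw [← LinearMap.range_eq_top]
    exact Submodule.eq_top_of_finrank_eq
      (by rw [← Matrix.rank, hrank, Module.finrank_fintype_fun_eq_card])
  exact LinearMap.injective_iff_surjective.2 hsurj (by simpa using hAv)

theorem Matrix.card_le_rank_of_det_submatrix_ne_zero {K m n k : Type*} [Field K] [Fintype n]
    [Fintype k] [DecidableEq k] (A : Matrix m n K) (f : k → m) (g : k → n)
    (h : (A.submatrix f g).det ≠ 0) : Fintype.card k ≤ A.rank :=
  (rank_of_det_ne_zero h).symm.le.trans (A.rank_submatrix_le f g)

theorem Matrix.det_submatrix_eq_zero_of_rank_lt {K m n k : Type*} [Field K] [Fintype n]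
    [Fintype k] [DecidableEq k] (A : Matrix m n K) (f : k → m) (g : k → n)
    (h : A.rank < Fintype.card k) : (A.submatrix f g).det = 0 :=
  by_contra fun hdet => h.not_ge (A.card_le_rank_of_det_submatrix_ne_zero f g hdet)

theorem rank_ulSub_mono {m n p q p' q' : ℕ} (A : Matrix (Fin m) (Fin n) ℝ) (hpp' : p ≤ p')
    (hqq' : q ≤ q') (hp : p ≤ m) (hq : q ≤ n) (hp' : p' ≤ m) (hq' : q' ≤ n) :
    (ulSub A p q hp hq).rank ≤ (ulSub A p' q' hp' hq').rank :=
  (ulSub A p' q' hp' hq').rank_submatrix_le (Fin.castLE hpp') (Fin.castLE hqq')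

theorem ulSub_om19_two_one : ulSub om19 2 1 (by norm_num) (by norm_num) = 0 := by
  ext i j
  fin_cases i <;> fin_cases j <;> rfl

theorem rank_ulSub_om19_two_three_le : (ulSub om19 2 3 (by norm_num) (by norm_num)).rank ≤ 1 := by
  have : ulSub om19 2 3 (by norm_num) (by norm_num) = Matrix.vecMulVec ![1, 0] ![0, 1, 0] := by
    ext i j
    fin_cases i <;> fin_cases j <;> simp [ulSub, om19, Matrix.vecMulVec_apply]
  rw [this]
  exact Matrix.rank_vecMulVec_le _ _

theorem one_le_rank_ulSub_om19_one_two :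
    1 ≤ (ulSub om19 1 2 (by norm_num) (by norm_num)).rank :=
  Matrix.card_le_rank_of_det_submatrix_ne_zero _ ![0] ![1] (by simp [ulSub, om19])

theorem one_le_rank_ulSub_om19_three_one :
    1 ≤ (ulSub om19 3 1 (by norm_num) (by norm_num)).rank :=
  Matrix.card_le_rank_of_det_submatrix_ne_zero _ ![2] ![0]
    (by rw [Matrix.det_fin_one]; simp [ulSub, om19])

theorem two_le_rank_ulSub_om19_three_two :
    2 ≤ (ulSub om19 3 2 (by norm_num) (by norm_num)).rank :=
  Matrix.card_le_rank_of_det_submatrix_ne_zero _ ![0, 2] ![0, 1]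
    (by rw [Matrix.det_fin_two]; simp [ulSub, om19])

section SchubertEquations

variable {A : Matrix (Fin 3) (Fin 3) ℝ} (h00 : A 0 0 = 0) (h10 : A 1 0 = 0)
  (hminor : A 0 1 * A 1 2 - A 1 1 * A 0 2 = 0)
include h00 h10

theorem ulSub_two_one_eq_zero : ulSub A 2 1 (by norm_num) (by norm_num) = 0 := by
  ext i j
  fin_cases i <;> fin_cases j <;> assumption

include hminor

theorem rank_ulSub_two_three_le_one : (ulSub A 2 3 (by norm_num) (by norm_num)).rank ≤ 1 := by
  have hfactor : ulSub A 2 3 (by norm_num) (by norm_num) =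
      A.submatrix ![0, 1] ![1, 2] * (!![0, 1, 0; 0, 0, 1] : Matrix (Fin 2) (Fin 3) ℝ) := by
    ext i j
    rw [Matrix.mul_apply, Fin.sum_univ_two]
    fin_cases i <;> fin_cases j <;> simp [ulSub, h00, h10]
  have hdet : (A.submatrix ![0, 1] ![1, 2]).det = 0 := by
    rw [Matrix.det_fin_two, ← hminor, mul_comm (A 1 1)]
    rfl
  have hrank := (A.submatrix ![0, 1] ![1, 2]).rank_lt_card_iff_det_eq_zero.2 hdet
  rw [Fintype.card_fin] at hrank
  rw [hfactor]
  exact (Matrix.rank_mul_le_left _ _).trans (Nat.le_of_lt_succ hrank)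

theorem rank_ulSub_three_three_le_two : (ulSub A 3 3 le_rfl le_rfl).rank ≤ 2 := by
  have hdet : (ulSub A 3 3 le_rfl le_rfl).det = A 2 0 * (A 0 1 * A 1 2 - A 1 1 * A 0 2) := by
    rw [Matrix.det_fin_three]
    simp only [ulSub, Matrix.submatrix_apply, Fin.castLE_refl, h00, h10]
    ring
  have hrank := (Matrix.rank_lt_card_iff_det_eq_zero _).2 (by rw [hdet, hminor, mul_zero])
  rw [Fintype.card_fin] at hrank
  exact Nat.le_of_lt_succ hrank

end SchubertEquations

theorem schubert_equations_of_rank_le {A : Matrix (Fin 3) (Fin 3) ℝ}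
    (hA : ∀ (p q : ℕ) (_ : 1 ≤ p) (_ : 1 ≤ q) (hp : p ≤ 3) (hq : q ≤ 3),
      (ulSub A p q hp hq).rank ≤ (ulSub om19 p q hp hq).rank) :
    A 0 0 = 0 ∧ A 1 0 = 0 ∧ A 0 1 * A 1 2 - A 1 1 * A 0 2 = 0 := by
  have h21 : (ulSub A 2 1 (by norm_num) (by norm_num)).rank < 1 := by
    have := hA 2 1 (by norm_num) le_rfl (by norm_num) (by norm_num)
    rw [ulSub_om19_two_one, Matrix.rank_zero] at this
    omega
  have h23 : (ulSub A 2 3 (by norm_num) le_rfl).rank < 2 :=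
    Nat.lt_succ_of_le ((hA 2 3 (by norm_num) (by norm_num) (by norm_num) le_rfl).trans
      rank_ulSub_om19_two_three_le)
  have h00 := Matrix.det_submatrix_eq_zero_of_rank_lt _ ![0] ![0] h21
  have h10 := Matrix.det_submatrix_eq_zero_of_rank_lt _ ![1] ![0] h21
  have hminor := Matrix.det_submatrix_eq_zero_of_rank_lt _ ![0, 1] ![1, 2] h23
  rw [Matrix.det_fin_one] at h00 h10
  rw [Matrix.det_fin_two] at hminor
  exact ⟨h00, h10, by rw [mul_comm (A 1 1)]; exact hminor⟩

theorem rank_le_of_schubert_equations {A : Matrix (Fin 3) (Fin 3) ℝ} (h00 : A 0 0 = 0)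
    (h10 : A 1 0 = 0) (hminor : A 0 1 * A 1 2 - A 1 1 * A 0 2 = 0) (p q : ℕ) (hp1 : 1 ≤ p)
    (hq1 : 1 ≤ q) (hp : p ≤ 3) (hq : q ≤ 3) :
    (ulSub A p q hp hq).rank ≤ (ulSub om19 p q hp hq).rank := by
  obtain hp2 | rfl : p ≤ 2 ∨ p = 3 := by omega
  · obtain rfl | hq2 : q = 1 ∨ 2 ≤ q := by omega
    · calc (ulSub A p 1 hp hq).rank
          ≤ (ulSub A 2 1 (by norm_num) hq).rank := rank_ulSub_mono A hp2 le_rfl _ _ _ _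
        _ = 0 := by rw [ulSub_two_one_eq_zero h00 h10, Matrix.rank_zero]
        _ ≤ _ := Nat.zero_le _
    · calc (ulSub A p q hp hq).rank
          ≤ (ulSub A 2 3 (by norm_num) le_rfl).rank := rank_ulSub_mono A hp2 hq _ _ _ _
        _ ≤ 1 := rank_ulSub_two_three_le_one h00 h10 hminor
        _ ≤ (ulSub om19 1 2 (by norm_num) (by norm_num)).rank := one_le_rank_ulSub_om19_one_two
        _ ≤ _ := rank_ulSub_mono om19 hp1 hq2 _ _ _ _
  · interval_cases q
    · exact (Matrix.rank_le_width _).trans one_le_rank_ulSub_om19_three_one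
    · exact (Matrix.rank_le_width _).trans two_le_rank_ulSub_om19_three_two
    · exact (rank_ulSub_three_three_le_two h00 h10 hminor).trans <|
        two_le_rank_ulSub_om19_three_two.trans (rank_ulSub_mono om19 le_rfl (by norm_num) _ _ _ _)

def cliffordCoordEquiv : Fin 3 × Fin 3 ≃ Fin 9 where
  toFun p := ![![7, 0, 2], ![8, 1, 3], ![4, 5, 6]] p.1 p.2
  invFun i := ![(0, 1), (1, 1), (0, 2), (1, 2), (2, 0), (2, 1), (2, 2), (0, 0), (1, 0)] i
  left_inv := by decide
  right_inv := by decide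

theorem piLpCongrLeft_cliffordCoordEquiv_image :
    LinearIsometryEquiv.piLpCongrLeft 2 ℝ ℝ cliffordCoordEquiv ''
        {v : EuclideanSpace ℝ (Fin 3 × Fin 3) |
          v (0, 0) = 0 ∧ v (1, 0) = 0 ∧ v (0, 1) * v (1, 2) - v (1, 1) * v (0, 2) = 0} =
      {x : EuclideanSpace ℝ (Fin 9) | x 0 * x 3 - x 1 * x 2 = 0 ∧ x 7 = 0 ∧ x 8 = 0} := by
  rw [LinearIsometryEquiv.image_eq_preimage_symm]
  ext x
  simp [LinearIsometryEquiv.piLpCongrLeft_symm, cliffordCoordEquiv, and_left_comm, and_comm]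

/-- the matrix Schubert variety `X̄_ω` for `ω` with `ω₁₂ = ω₃₁ = 1` is
`{A : A₁₁ = A₂₁ = 0, A₁₂A₂₃ − A₂₂A₁₃ = 0}`, and (as a subset of `ℝ⁹ ≅ M₃ₓ₃(ℝ)` with
the trace inner product) it is isometric to `Cl₃ × ℝ³ ⊆ ℝ⁴ × ℝ³ ⊆ ℝ⁹`, where `Cl₃` is
the cone over the Clifford torus, the set of `2×2` matrices of determinant `0`. -/
theorem schubert_congruent_clifford_cone :
    ({A : Matrix (Fin 3) (Fin 3) ℝ |
        ∀ (p q : ℕ) (_ : 1 ≤ p) (_ : 1 ≤ q) (hp : p ≤ 3) (hq : q ≤ 3),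
          (ulSub A p q hp hq).rank ≤ (ulSub om19 p q hp hq).rank} =
      {A : Matrix (Fin 3) (Fin 3) ℝ |
        A 0 0 = 0 ∧ A 1 0 = 0 ∧ A 0 1 * A 1 2 - A 1 1 * A 0 2 = 0}) ∧
    ∃ f : EuclideanSpace ℝ (Fin 3 × Fin 3) ≃ₗᵢ[ℝ] EuclideanSpace ℝ (Fin 9),
      f '' {v : EuclideanSpace ℝ (Fin 3 × Fin 3) |
          v (0, 0) = 0 ∧ v (1, 0) = 0 ∧ v (0, 1) * v (1, 2) - v (1, 1) * v (0, 2) = 0} =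
        {x : EuclideanSpace ℝ (Fin 9) |
          x 0 * x 3 - x 1 * x 2 = 0 ∧ x 7 = 0 ∧ x 8 = 0} := by
  refine ⟨Set.ext fun A => ⟨schubert_equations_of_rank_le, ?_⟩,
    _, piLpCongrLeft_cliffordCoordEquiv_image⟩
  exact fun ⟨h00, h10, hminor⟩ => rank_le_of_schubert_equations h00 h10 hminor
end
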